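/- arXiv:math/0508359 — 8 statements merged into one kernel-verified Lean document; each statement's English description precedes it below -/
import Mathlib

section
/- If S spans L and T ⊆ L is σ-saturated on S, then T is a σ̄-generating set of L, where σ̄ = {1,…,n} ∖ σ. -/
open scoped Classical

noncomputable section

variable {ι : Type*} [Fintype ι]

/-- `x ∈ ℕ^n`, i.e. all coordinates nonnegative. -/
def Nonneg (x : ι → ℤ) : Prop := ∀ i, 0 ≤ x i

/-- componentwise positive part `u⁺`. -/
def vposPart (x : ι → ℤ) : ι → ℤ := fun i => max (x i) 0

/-- componentwise negative part `u⁻`. -/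
def vnegPart (x : ι → ℤ) : ι → ℤ := fun i => max (-x i) 0

/-- support of a vector. -/
def suppV (x : ι → ℤ) : Set ι := {i | x i ≠ 0}

/-- membership in the fiber `F_{L,b} = {x ∈ ℕ^n : x ≡ b (mod L)}`. -/
def inFiber (L : AddSubgroup (ι → ℤ)) (b x : ι → ℤ) : Prop :=
  Nonneg x ∧ x - b ∈ L

/-- adjacency in the fiber graph: `x` and `y` differ by an element of `±S`. -/
def adjS (S : Set (ι → ℤ)) (x y : ι → ℤ) : Prop := x - y ∈ S ∨ y - x ∈ S

/-- `p 0, p 1, …, p k` is a path in the fiber graph `G(F_{L,b}, S)`. -/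
def IsPathIn (L : AddSubgroup (ι → ℤ)) (S : Set (ι → ℤ)) (b : ι → ℤ)
    (k : ℕ) (p : ℕ → ι → ℤ) : Prop :=
  (∀ i ≤ k, inFiber L b (p i)) ∧ ∀ i < k, adjS S (p i) (p (i+1))

/-- `x` and `y` are connected in the fiber graph `G(F_{L,b}, S)`. -/
def ConnIn (L : AddSubgroup (ι → ℤ)) (S : Set (ι → ℤ)) (b x y : ι → ℤ) : Prop :=
  ∃ k p, IsPathIn L S b k p ∧ p 0 = x ∧ p k = y

/-- `S` is a generating set of the lattice `L`: all fiber graphs are connected. -/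
def IsGenSet (L : AddSubgroup (ι → ℤ)) (S : Set (ι → ℤ)) : Prop :=
  ∀ b x y, inFiber L b x → inFiber L b y → ConnIn L S b x y

/-- `succ` (written `≻`) is a term ordering for `L`: an additive total
well-ordering on every fiber. -/
structure IsTermOrder (L : AddSubgroup (ι → ℤ))
    (succ : (ι → ℤ) → (ι → ℤ) → Prop) : Prop where
  trans : ∀ {x y z}, succ x y → succ y z → succ x z
  irrefl : ∀ x, ¬ succ x x
  total : ∀ b x y, inFiber L b x → inFiber L b y → x ≠ y → succ x y ∨ succ y x
  additive : ∀ x y γ, Nonneg γ → succ x y → succ (x + γ) (y + γ)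
  wf : ∀ b, WellFounded (fun x y : ι → ℤ => inFiber L b x ∧ inFiber L b y ∧ succ y x)

/-- `L_≻ = {u ∈ L : u⁺ ≻ u⁻}`. -/
def Lpos (L : AddSubgroup (ι → ℤ)) (succ : (ι → ℤ) → (ι → ℤ) → Prop) :
    Set (ι → ℤ) :=
  {u | u ∈ L ∧ succ (vposPart u) (vnegPart u)}

/-- `m` is the `≻`-minimal element of the fiber `F_{L,b}`. -/
def IsMinimalFiber (L : AddSubgroup (ι → ℤ)) (b : ι → ℤ)
    (succ : (ι → ℤ) → (ι → ℤ) → Prop) (m : ι → ℤ) : Prop :=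
  inFiber L b m ∧ ∀ y, inFiber L b y → y ≠ m → succ y m

/-- `G` is a `≻`-Gröbner basis of `L`: from every `x ∈ ℕ^n` there is a
`≻`-decreasing path in `G(F_{L,x},G)` to the `≻`-minimal element of `F_{L,x}`. -/
def IsGroebner (L : AddSubgroup (ι → ℤ)) (succ : (ι → ℤ) → (ι → ℤ) → Prop)
    (G : Set (ι → ℤ)) : Prop :=
  ∀ x, Nonneg x → ∃ m, IsMinimalFiber L x succ m ∧
    ∃ k p, IsPathIn L G x k p ∧ p 0 = x ∧ p k = m ∧ ∀ i < k, succ (p i) (p (i+1))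

/-- there is a `≻`-reduction path from `x` to `y` in `G(F_{L,b},G)`:
no intermediate node is `≻` than both endpoints. -/
def IsRedPath (L : AddSubgroup (ι → ℤ)) (G : Set (ι → ℤ)) (b : ι → ℤ)
    (succ : (ι → ℤ) → (ι → ℤ) → Prop) (x y : ι → ℤ) : Prop :=
  ∃ k p, IsPathIn L G b k p ∧ p 0 = x ∧ p k = y ∧
    ∀ i, 0 < i → i < k → ¬ (succ (p i) x ∧ succ (p i) y)

/-- `(x,z,y)` is a `≻`-critical path in `G(F_{L,b},G)`. -/
def IsCriticalIn (L : AddSubgroup (ι → ℤ)) (G : Set (ι → ℤ)) (b : ι → ℤ)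
    (succ : (ι → ℤ) → (ι → ℤ) → Prop) (x z y : ι → ℤ) : Prop :=
  inFiber L b x ∧ inFiber L b z ∧ inFiber L b y ∧
  adjS G x z ∧ adjS G z y ∧ succ z x ∧ succ z y

/-- `z^(u,v) := max{u⁺, v⁺}` componentwise. -/
def zOf (u v : ι → ℤ) : ι → ℤ := fun i => max (vposPart u i) (vposPart v i)

/-- `x^(u,v) := z^(u,v) − u`. -/
def xOf (u v : ι → ℤ) : ι → ℤ := zOf u v - u

/-- `y^(u,v) := z^(u,v) − v`. -/
def yOf (u v : ι → ℤ) : ι → ℤ := zOf u v - v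

/-- `(x,z,y)` is a `≻`-critical path for the pair `(u,v)`. -/
def IsCriticalFor (succ : (ι → ℤ) → (ι → ℤ) → Prop) (u v x z y : ι → ℤ) : Prop :=
  Nonneg x ∧ Nonneg z ∧ Nonneg y ∧ z - x = u ∧ z - y = v ∧ succ z x ∧ succ z y

/-- rational inner product `φ·x`. -/
def qdot (φ : ι → ℚ) (x : ι → ℤ) : ℚ := ∑ i, φ i * (x i : ℚ)

/-- there is a `φ`-reduction path from `x` to `y` in `G(F_{L,b},G)`. -/
def IsPhiRedPath (L : AddSubgroup (ι → ℤ)) (G : Set (ι → ℤ)) (b : ι → ℤ)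
    (φ : ι → ℚ) (x y : ι → ℤ) : Prop :=
  ∃ k p, IsPathIn L G b k p ∧ p 0 = x ∧ p k = y ∧
    ∀ i, 0 < i → i < k → ¬ (qdot φ x < qdot φ (p i) ∧ qdot φ y < qdot φ (p i))

/-- `G` is a `φ`-Gröbner basis of `L`. -/
def IsPhiGroebner (L : AddSubgroup (ι → ℤ)) (φ : ι → ℚ) (G : Set (ι → ℤ)) : Prop :=
  ∀ b x y, inFiber L b x → inFiber L b y → IsPhiRedPath L G b φ x y

/-- `x ∧_σ y`: componentwise min on `σ`, zero elsewhere. -/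
def meetOn (σ : Set ι) (x y : ι → ℤ) : ι → ℤ :=
  fun i => if i ∈ σ then min (x i) (y i) else 0

/-- `T` is `σ`-saturated on `S`. -/
def IsSaturatedOn (L : AddSubgroup (ι → ℤ)) (σ : Set ι) (S T : Set (ι → ℤ)) : Prop :=
  ∀ b x y, inFiber L b x → inFiber L b y → ConnIn L S b x y →
    ConnIn L T (b - meetOn σ x y) (x - meetOn σ x y) (y - meetOn σ x y)

/-- membership in `F^σ_{L,b}`: nonnegative outside `σ`. -/
def inFiberFree (L : AddSubgroup (ι → ℤ)) (σ : Set ι) (b x : ι → ℤ) : Prop :=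
  (∀ i, i ∉ σ → 0 ≤ x i) ∧ x - b ∈ L

/-- path in the graph `G(F^σ_{L,b}, S)`. -/
def IsPathFree (L : AddSubgroup (ι → ℤ)) (σ : Set ι) (S : Set (ι → ℤ)) (b : ι → ℤ)
    (k : ℕ) (p : ℕ → ι → ℤ) : Prop :=
  (∀ i ≤ k, inFiberFree L σ b (p i)) ∧ ∀ i < k, adjS S (p i) (p (i+1))

/-- connectivity in `G(F^σ_{L,b}, S)`. -/
def ConnFree (L : AddSubgroup (ι → ℤ)) (σ : Set ι) (S : Set (ι → ℤ))
    (b x y : ι → ℤ) : Prop :=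
  ∃ k p, IsPathFree L σ S b k p ∧ p 0 = x ∧ p k = y

/-- `S` is a `σ`-generating set of `L`. -/
def IsGenSetFree (L : AddSubgroup (ι → ℤ)) (σ : Set ι) (S : Set (ι → ℤ)) : Prop :=
  ∀ b x y, inFiberFree L σ b x → inFiberFree L σ b y → ConnFree L σ S b x y

/-- there is a `z`-bounded path from `x` to `y` in `G(F_{L,b},G)`:
all nodes are `≺ z`. -/
def IsBoundedPath (L : AddSubgroup (ι → ℤ)) (G : Set (ι → ℤ)) (b : ι → ℤ)
    (succ : (ι → ℤ) → (ι → ℤ) → Prop) (z x y : ι → ℤ) : Prop :=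
  ∃ k p, IsPathIn L G b k p ∧ p 0 = x ∧ p k = y ∧ ∀ i ≤ k, succ z (p i)

/-- `ē^i = −e^i` as a rational vector. -/
def ebar [DecidableEq ι] (i : ι) : ι → ℚ := fun j => if j = i then -1 else 0

/-- projection deleting the `i`-th coordinate. -/
def projCoord {n : ℕ} (i : Fin (n+1)) : (Fin (n+1) → ℤ) →+ (Fin n → ℤ) where
  toFun x := fun j => x (i.succAbove j)
  map_zero' := rfl
  map_add' _ _ := rfl

/-- projection onto the coordinates outside `σ`. -/
def projSet {n : ℕ} (σ : Finset (Fin n)) :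
    (Fin n → ℤ) →+ ({ i : Fin n // i ∉ σ } → ℤ) where
  toFun x := fun j => x j.1
  map_zero' := rfl
  map_add' _ _ := rfl

end

/-!
Since `S` spans `L`, two points `x, y` of `F^{σ̄}_{L,b}` are joined by a walk with steps in `±S`
whose nodes may have negative coordinates. Translating the walk by a large enough `v` puts it in
`ℕ^n`, so `x + v` and `y + v` are connected in `G(F_{L,b+v}, S)`. Saturation then connects
`x + v - γ` and `y + v - γ` through `T`, where `γ = (x + v) ∧_σ (y + v)`. Translating back by
`γ - v`, which equals `x ∧ y ≥ 0` on `σ`, gives a `T`-path from `x` to `y` whose nodes are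
nonnegative on `σ`, i.e. a path in `G(F^{σ̄}_{L,b}, T)`.
-/

open Relation

lemma Relation.ReflTransGen.exists_path {α : Type*} {r : α → α → Prop} {a b : α}
    (h : ReflTransGen r a b) :
    ∃ (k : ℕ) (p : ℕ → α), p 0 = a ∧ p k = b ∧ ∀ i < k, r (p i) (p (i + 1)) := by
  induction h with
  | refl => exact ⟨0, fun _ => a, rfl, rfl, by simp⟩
  | @tail _ c _ hbc ih =>
    obtain ⟨k, p, hp0, hpk, hp⟩ := ih
    refine ⟨k + 1, fun i => if i ≤ k then p i else c, by simp [hp0], by simp, fun i hi => ?_⟩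
    rcases Nat.lt_succ_iff_lt_or_eq.mp hi with hi | rfl
    · simpa [hi.le, Nat.succ_le_of_lt hi] using hp i hi
    · simpa [hpk] using hbc

section

variable {ι : Type*}

instance (S : Set (ι → ℤ)) : Std.Symm (adjS S) :=
  ⟨fun _ _ => Or.symm⟩

lemma adjS_add_right {S : Set (ι → ℤ)} {x y : ι → ℤ} (c : ι → ℤ) (h : adjS S x y) :
    adjS S (x + c) (y + c) := by
  simpa only [adjS, add_sub_add_right_eq_sub] using h

lemma sub_mem_closure_of_adjS {S : Set (ι → ℤ)} {x y : ι → ℤ} (h : adjS S x y) :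
    y - x ∈ AddSubgroup.closure S := by
  rcases h with h | h
  · simpa using neg_mem (AddSubgroup.subset_closure h)
  · exact AddSubgroup.subset_closure h

lemma sub_mem_closure_of_path {S : Set (ι → ℤ)} {k : ℕ} {p : ℕ → ι → ℤ}
    (hp : ∀ i < k, adjS S (p i) (p (i + 1))) : ∀ t ≤ k, p t - p 0 ∈ AddSubgroup.closure S := by
  intro t ht
  induction t with
  | zero => simp
  | succ t ih =>
    have hstep := sub_mem_closure_of_adjS (hp t ht)
    simpa using add_mem (ih (by omega)) hstep

lemma reflTransGen_adjS_of_sub_mem_closure {S : Set (ι → ℤ)} {x y : ι → ℤ}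
    (h : y - x ∈ AddSubgroup.closure S) : ReflTransGen (adjS S) x y := by
  suffices ∀ d ∈ AddSubgroup.closure S, ∀ x, ReflTransGen (adjS S) x (x + d) by
    simpa using this _ h x
  intro d hd
  induction hd using AddSubgroup.closure_induction with
  | mem s hs => exact fun x => .single (Or.inr (by simpa using hs))
  | zero => simpa using fun _ => .refl
  | add a b _ _ iha ihb => exact fun x => (iha x).trans (by simpa [add_assoc] using ihb (x + a))
  | neg a _ iha =>
    intro x
    exact Std.Symm.symm _ _ (by simpa using iha (x + -a))

lemma exists_add_nonneg (k : ℕ) (p : ℕ → ι → ℤ) : ∃ v, ∀ t ≤ k, Nonneg (p t + v) := by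
  refine ⟨∑ t ∈ Finset.range (k + 1), vnegPart (p t), fun t ht i => ?_⟩
  have hle : vnegPart (p t) i ≤ ∑ s ∈ Finset.range (k + 1), vnegPart (p s) i :=
    Finset.single_le_sum (f := fun s => vnegPart (p s) i) (fun _ _ => le_max_right _ _)
      (Finset.mem_range.mpr (by omega))
  have hneg : -p t i ≤ vnegPart (p t) i := le_max_left _ _
  simp only [Pi.add_apply, Finset.sum_apply]
  linarith

lemma ConnIn.inFiber_left {L : AddSubgroup (ι → ℤ)} {S : Set (ι → ℤ)} {b x y : ι → ℤ}
    (h : ConnIn L S b x y) : inFiber L b x := by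
  obtain ⟨k, p, ⟨hp, -⟩, rfl, -⟩ := h
  exact hp 0 k.zero_le

lemma ConnIn.inFiber_right {L : AddSubgroup (ι → ℤ)} {S : Set (ι → ℤ)} {b x y : ι → ℤ}
    (h : ConnIn L S b x y) : inFiber L b y := by
  obtain ⟨k, p, ⟨hp, -⟩, -, rfl⟩ := h
  exact hp k le_rfl

lemma ConnIn.connFree_add {L : AddSubgroup (ι → ℤ)} {S : Set (ι → ℤ)} {b x y : ι → ℤ}
    (h : ConnIn L S b x y) {τ : Set ι} {c : ι → ℤ} (hc : ∀ i ∉ τ, 0 ≤ c i) :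
    ConnFree L τ S (b + c) (x + c) (y + c) := by
  obtain ⟨k, q, ⟨hq, hadj⟩, rfl, rfl⟩ := h
  refine ⟨k, fun t => q t + c, ⟨fun t ht => ⟨fun i hi => ?_, ?_⟩,
    fun t ht => adjS_add_right c (hadj t ht)⟩, rfl, rfl⟩
  · exact add_nonneg ((hq t ht).1 i) (hc i hi)
  · simpa only [add_sub_add_right_eq_sub] using (hq t ht).2

lemma exists_connIn_add {L : AddSubgroup (ι → ℤ)} {S : Set (ι → ℤ)}
    (hspan : AddSubgroup.closure S = L) {b x y : ι → ℤ} (hx : x - b ∈ L) (hy : y - b ∈ L) :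
    ∃ v, ConnIn L S (b + v) (x + v) (y + v) := by
  have hyx : y - x ∈ AddSubgroup.closure S := by
    simpa [hspan] using L.sub_mem hy hx
  obtain ⟨k, p, hp0, hpk, hp⟩ := (reflTransGen_adjS_of_sub_mem_closure hyx).exists_path
  obtain ⟨v, hv⟩ := exists_add_nonneg k p
  refine ⟨v, k, fun t => p t + v, ⟨fun t ht => ⟨hv t ht, ?_⟩,
    fun t ht => adjS_add_right v (hp t ht)⟩, by simp only [hp0], by simp only [hpk]⟩
  have hpt : p t + v - (b + v) = (p t - p 0) + (x - b) := by rw [hp0]; abel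
  rw [hpt]
  exact add_mem (hspan ▸ sub_mem_closure_of_path hp t ht) hx

lemma meetOn_add_add_right {σ : Set ι} {i : ι} (hi : i ∈ σ) (x y v : ι → ℤ) :
    meetOn σ (x + v) (y + v) i = min (x i) (y i) + v i := by
  simp [meetOn, hi, min_add_add_right]

end

theorem stmt11_general {n : ℕ} (L : AddSubgroup (Fin n → ℤ))
    (σ : Set (Fin n)) (S T : Set (Fin n → ℤ))
    (hspan : AddSubgroup.closure S = L)
    (hsat : IsSaturatedOn L σ S T) :
    IsGenSetFree L σᶜ T := by
  intro b x y hx hy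
  obtain ⟨v, hconn⟩ := exists_connIn_add hspan hx.2 hy.2
  set γ := meetOn σ (x + v) (y + v)
  have hshift : ∀ i ∉ σᶜ, 0 ≤ (γ - v) i := by
    intro i hi
    simpa [γ, meetOn_add_add_right (Set.notMem_compl_iff.mp hi)] using
      le_min (hx.1 i hi) (hy.1 i hi)
  have hpath := (hsat _ _ _ hconn.inFiber_left hconn.inFiber_right hconn).connFree_add hshift
  convert hpath using 1 <;> abel

/-- if `S` spans `L` and `T ⊆ L` is `σ`-saturated on `S`,
then `T` is a `σ̄`-generating set of `L`. -/
theorem stmt11 {n : ℕ} (L : AddSubgroup (Fin n → ℤ))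
    (σ : Set (Fin n)) (S T : Set (Fin n → ℤ))
    (hS : ∀ s ∈ S, s ∈ L) (hT : ∀ s ∈ T, s ∈ L)
    (hspan : AddSubgroup.closure S = L)
    (hsat : IsSaturatedOn L σ S T) :
    IsGenSetFree L σᶜ T :=
  stmt11_general L σ S T hspan hsat
end

section
/- Let i ∈ {1,…,n} with ker(π_{i}) ∩ L = {0}, and let S ⊆ L^{i} := π_{i}(L). Then S is an ω̄^i-Gröbner basis of L^{i} if and only if π_{i}⁻¹(S) is an ē^i-Gröbner basis of L. -/
open scoped Classical

/-!
Since `π_i` is injective on `L` and `ω · π_i u = u_i` for `u ∈ L`, the projection `π_i`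
embeds each fiber `F_{L,b}` into `F_{L^i, π_i b}`, and on a fiber the values `ē^i · x` and
`ω̄^i · π_i x` differ by a constant. Hence reduction paths project to reduction paths.
Conversely, a reduction path downstairs lifts to `b + L`, and the lift stays in `ℕ^(n+1)`:
an intermediate node has `ē^i`-value at most that of one endpoint, i.e. its `i`-th
coordinate is at least that endpoint's. Finally, two points of a fiber of `L^i` lift to a
common fiber of `L` once the `i`-th coordinate is chosen large enough.
-/

section Fibers

variable {ι κ : Type*}

lemma qdot_sub [Fintype ι] (φ : ι → ℚ) (a b : ι → ℤ) :
    qdot φ (a - b) = qdot φ a - qdot φ b := by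
  simp [qdot, mul_sub, Finset.sum_sub_distrib]

lemma qdot_neg_left [Fintype ι] (φ : ι → ℚ) (a : ι → ℤ) : qdot (-φ) a = -qdot φ a := by
  simp [qdot, Finset.sum_neg_distrib]

lemma qdot_ebar [Fintype ι] [DecidableEq ι] (i : ι) (x : ι → ℤ) :
    qdot (ebar i) x = -(x i) := by
  simp [qdot, ebar, ite_mul]

lemma inFiber.sub_mem {L : AddSubgroup (ι → ℤ)} {b x y : ι → ℤ}
    (hx : inFiber L b x) (hy : inFiber L b y) : x - y ∈ L := by
  simpa using L.sub_mem hx.2 hy.2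

lemma inFiber.of_sub_mem {L : AddSubgroup (ι → ℤ)} {b b' x : ι → ℤ}
    (hx : inFiber L b x) (hb : b - b' ∈ L) : inFiber L b' x :=
  ⟨hx.1, by simpa using L.add_mem hx.2 hb⟩

lemma IsPhiRedPath.of_base_sub_mem [Fintype ι] {L : AddSubgroup (ι → ℤ)} {G : Set (ι → ℤ)}
    {φ : ι → ℚ} {b b' x y : ι → ℤ} (h : IsPhiRedPath L G b φ x y) (hb : b - b' ∈ L) :
    IsPhiRedPath L G b' φ x y := by
  obtain ⟨k, p, ⟨hpF, hpA⟩, hp0, hpk, hred⟩ := h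
  exact ⟨k, p, ⟨fun j hj => (hpF j hj).of_sub_mem hb, hpA⟩, hp0, hpk, hred⟩

variable {L : AddSubgroup (ι → ℤ)} (f : (ι → ℤ) →+ (κ → ℤ))

lemma inFiber.map {b x : ι → ℤ} (hf : ∀ x, Nonneg x → Nonneg (f x))
    (hx : inFiber L b x) : inFiber (L.map f) (f b) (f x) :=
  ⟨hf x hx.1, by simpa using L.mem_map_of_mem f hx.2⟩

lemma adjS.map {S : Set (κ → ℤ)} {x y : ι → ℤ} (h : adjS {u | u ∈ L ∧ f u ∈ S} x y) :
    adjS S (f x) (f y) := by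
  simpa only [adjS, ← map_sub] using h.imp And.right And.right

lemma adjS.of_map {S : Set (κ → ℤ)} {x y : ι → ℤ} (hxy : x - y ∈ L)
    (h : adjS S (f x) (f y)) : adjS {u | u ∈ L ∧ f u ∈ S} x y := by
  rw [adjS, ← map_sub, ← map_sub] at h
  exact h.imp (fun h => ⟨hxy, h⟩) (fun h => ⟨by simpa using L.neg_mem hxy, h⟩)

lemma exists_sub_mem_map_eq {b x : ι → ℤ} {v : κ → ℤ} (hx : inFiber L b x)
    (hv : inFiber (L.map f) (f b) v) : ∃ w, w - x ∈ L ∧ f w = v := by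
  have hvx : v - f x ∈ L.map f := by
    simpa using (L.map f).sub_mem hv.2 (L.mem_map_of_mem f hx.2)
  obtain ⟨u, hu, hfu⟩ := AddSubgroup.mem_map.mp hvx
  exact ⟨x + u, by simpa using hu, by rw [map_add, hfu, add_sub_cancel]⟩

lemma eq_of_sub_mem_of_map_eq (hker : ∀ u ∈ L, f u = 0 → u = 0) {a c : ι → ℤ}
    (hac : a - c ∈ L) (h : f a = f c) : a = c :=
  sub_eq_zero.mp (hker _ hac (by rw [map_sub, h, sub_self]))

variable [Fintype ι] [Fintype κ] {φ : ι → ℚ} {ψ : κ → ℚ}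

lemma qdot_lt_iff_of_sub_mem (hφ : ∀ u ∈ L, qdot ψ (f u) = qdot φ u) {a c : ι → ℤ}
    (hac : a - c ∈ L) : qdot φ a < qdot φ c ↔ qdot ψ (f a) < qdot ψ (f c) := by
  have := hφ _ hac
  rw [map_sub, qdot_sub, qdot_sub] at this
  constructor <;> intro h <;> linarith

lemma IsPhiRedPath.map (hf : ∀ x, Nonneg x → Nonneg (f x))
    (hφ : ∀ u ∈ L, qdot ψ (f u) = qdot φ u) {S : Set (κ → ℤ)} {b x y : ι → ℤ}
    (h : IsPhiRedPath L {u | u ∈ L ∧ f u ∈ S} b φ x y) :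
    IsPhiRedPath (L.map f) S (f b) ψ (f x) (f y) := by
  obtain ⟨k, p, ⟨hpF, hpA⟩, rfl, rfl, hred⟩ := h
  refine ⟨k, fun j => f (p j), ⟨fun j hj => (hpF j hj).map f hf,
    fun j hj => (hpA j hj).map f⟩, rfl, rfl, fun j hj0 hjk => ?_⟩
  have hpj := hpF j hjk.le
  rw [← qdot_lt_iff_of_sub_mem f hφ ((hpF 0 k.zero_le).sub_mem hpj),
    ← qdot_lt_iff_of_sub_mem f hφ ((hpF k le_rfl).sub_mem hpj)]
  exact hred j hj0 hjk

end Fibers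

section DeleteCoordinate

variable {n : ℕ} {L : AddSubgroup (Fin (n+1) → ℤ)} {i : Fin (n+1)}

@[simp]
lemma projCoord_apply (x : Fin (n+1) → ℤ) (m : Fin n) :
    projCoord i x m = x (i.succAbove m) :=
  rfl

lemma nonneg_iff_projCoord (x : Fin (n+1) → ℤ) :
    Nonneg x ↔ 0 ≤ x i ∧ Nonneg (projCoord i x) := by
  simp only [Nonneg, projCoord_apply]
  exact Fin.forall_iff_succAbove i

lemma Nonneg.projCoord {x : Fin (n+1) → ℤ} (hx : Nonneg x) : Nonneg (projCoord i x) :=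
  ((nonneg_iff_projCoord x).mp hx).2

lemma exists_nonneg_lift_of_sub_mem {v w : Fin n → ℤ} (hv : Nonneg v) (hw : Nonneg w)
    (hvw : v - w ∈ L.map (projCoord i)) :
    ∃ x y, Nonneg x ∧ Nonneg y ∧ y - x ∈ L ∧ projCoord i x = v ∧ projCoord i y = w := by
  obtain ⟨u, hu, hπu⟩ := AddSubgroup.mem_map.mp hvw
  set x : Fin (n+1) → ℤ := Fin.insertNth i (max (u i) 0) v
  have hπx : projCoord i x = v := funext fun m => by simp [x]
  have hxi : x i = max (u i) 0 := by simp [x]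
  have hπy : projCoord i (x - u) = w := by rw [map_sub, hπx, hπu, sub_sub_cancel]
  refine ⟨x, x - u, ?_, ?_, by simpa using L.neg_mem hu, hπx, hπy⟩
  · rw [nonneg_iff_projCoord, hxi, hπx]
    exact ⟨le_max_right _ _, hv⟩
  · rw [nonneg_iff_projCoord, hπy, Pi.sub_apply, hxi]
    exact ⟨by omega, hw⟩

lemma IsPhiRedPath.of_map_projCoord (hker : ∀ u ∈ L, projCoord i u = 0 → u = 0)
    {ψ : Fin n → ℚ} (hψ : ∀ u ∈ L, qdot ψ (projCoord i u) = qdot (ebar i) u)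
    {S : Set (Fin n → ℤ)} {b x y : Fin (n+1) → ℤ} (hx : inFiber L b x) (hy : inFiber L b y)
    (h : IsPhiRedPath (L.map (projCoord i)) S (projCoord i b) ψ (projCoord i x)
      (projCoord i y)) :
    IsPhiRedPath L {u | u ∈ L ∧ projCoord i u ∈ S} b (ebar i) x y := by
  obtain ⟨k, q, ⟨hqF, hqA⟩, hq0, hqk, hred⟩ := h
  choose! p hpx hpq using fun j (hj : j ≤ k) =>
    exists_sub_mem_map_eq (projCoord i) hx (hqF j hj)
  have hpy : ∀ j ≤ k, p j - y ∈ L := fun j hj => by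
    simpa using L.sub_mem (hpx j hj) (hy.sub_mem hx)
  have hp0 : p 0 = x :=
    eq_of_sub_mem_of_map_eq _ hker (hpx 0 k.zero_le) (by rw [hpq 0 k.zero_le, hq0])
  have hpk : p k = y :=
    eq_of_sub_mem_of_map_eq _ hker (hpy k le_rfl) (by rw [hpq k le_rfl, hqk])
  have hred' : ∀ j, 0 < j → j < k →
      ¬(qdot (ebar i) x < qdot (ebar i) (p j) ∧ qdot (ebar i) y < qdot (ebar i) (p j)) := by
    intro j hj0 hjk
    rw [qdot_lt_iff_of_sub_mem _ hψ (by simpa using L.neg_mem (hpx j hjk.le)),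
      qdot_lt_iff_of_sub_mem _ hψ (by simpa using L.neg_mem (hpy j hjk.le)), hpq j hjk.le]
    exact hred j hj0 hjk
  have hcoord : ∀ j ≤ k, x i ≤ p j i ∨ y i ≤ p j i := by
    intro j hj
    rcases Nat.eq_zero_or_pos j with rfl | hj0
    · exact Or.inl (hp0 ▸ le_rfl)
    rcases hj.lt_or_eq with hjk | rfl
    · have := hred' j hj0 hjk
      simp only [qdot_ebar, neg_lt_neg_iff, Int.cast_lt] at this
      omega
    · exact Or.inr (hpk ▸ le_rfl)
  have hpF : ∀ j ≤ k, inFiber L b (p j) := fun j hj => by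
    refine ⟨(nonneg_iff_projCoord _).mpr ⟨?_, hpq j hj ▸ (hqF j hj).1⟩, ?_⟩
    · have := hx.1 i; have := hy.1 i; have := hcoord j hj; omega
    · simpa using L.add_mem (hpx j hj) hx.2
  refine ⟨k, p, ⟨hpF, fun j hj => adjS.of_map _ ((hpF j hj.le).sub_mem (hpF _ hj)) ?_⟩,
    hp0, hpk, hred'⟩
  rw [hpq j hj.le, hpq _ hj]
  exact hqA j hj

end DeleteCoordinate

theorem stmt12_general {n : ℕ} (L : AddSubgroup (Fin (n+1) → ℤ))
    (i : Fin (n+1))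
    (hker : ∀ u ∈ L, projCoord i u = 0 → u = 0)
    (ω : Fin n → ℚ) (hω : ∀ u ∈ L, qdot ω (projCoord i u) = (u i : ℚ))
    (S : Set (Fin n → ℤ)) :
    IsPhiGroebner (L.map (projCoord i)) (-ω) S ↔
      IsPhiGroebner L (ebar i) {u | u ∈ L ∧ projCoord i u ∈ S} := by
  have hω' : ∀ u ∈ L, qdot (-ω) (projCoord i u) = qdot (ebar i) u := fun u hu => by
    rw [qdot_neg_left, hω u hu, qdot_ebar]
  have hπ : ∀ x, Nonneg x → Nonneg (projCoord i x) := fun _ => Nonneg.projCoord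
  constructor
  · intro h b x y hx hy
    exact .of_map_projCoord hker hω' hx hy (h _ _ _ (hx.map _ hπ) (hy.map _ hπ))
  · intro h b v w hv hw
    obtain ⟨x, y, hx, hy, hyx, rfl, rfl⟩ :=
      exists_nonneg_lift_of_sub_mem hv.1 hw.1 (hv.sub_mem hw)
    have hxy := h x x y ⟨hx, by simp⟩ ⟨hy, hyx⟩
    exact (hxy.map _ hπ hω').of_base_sub_mem (by simpa using hv.2)

/-- with `ker(π_i) ∩ L = {0}` and `S ⊆ L^i`, `S` is an
`ω̄^i`-Gröbner basis of `L^i` iff `π_i⁻¹(S)` is an `ē^i`-Gröbner basis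
of `L`. -/
theorem stmt12 {n : ℕ} (L : AddSubgroup (Fin (n+1) → ℤ))
    (hL : ∀ u ∈ L, Nonneg u → u = 0) (i : Fin (n+1))
    (hker : ∀ u ∈ L, projCoord i u = 0 → u = 0)
    (ω : Fin n → ℚ) (hω : ∀ u ∈ L, qdot ω (projCoord i u) = (u i : ℚ))
    (S : Set (Fin n → ℤ)) (hS : ∀ s ∈ S, s ∈ L.map (projCoord i)) :
    IsPhiGroebner (L.map (projCoord i)) (-ω) S ↔
      IsPhiGroebner L (ebar i) {u | u ∈ L ∧ projCoord i u ∈ S} :=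
  stmt12_general L i hker ω hω S
end

section
/- Let σ ⊆ {1,…,n} with ker(π_σ) ∩ L = {0}, and S ⊆ L^σ := π_σ(L). Then S is a generating set of L^σ if and only if π_σ⁻¹(S) is a σ-generating set of L. -/
open scoped Classical

noncomputable def liftEll {n : ℕ} (L : AddSubgroup (Fin n → ℤ)) (σ : Finset (Fin n))
    (z : { i : Fin n // i ∉ σ } → ℤ) : Fin n → ℤ :=
  if h : z ∈ L.map (projSet σ) then (AddSubgroup.mem_map.mp h).choose else 0

lemma liftEll_spec {n : ℕ} (L : AddSubgroup (Fin n → ℤ)) (σ : Finset (Fin n))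
    {z : { i : Fin n // i ∉ σ } → ℤ} (h : z ∈ L.map (projSet σ)) :
    liftEll L σ z ∈ L ∧ projSet σ (liftEll L σ z) = z := by
  rw [liftEll, dif_pos h]
  obtain ⟨hm, hp⟩ := (AddSubgroup.mem_map.mp h).choose_spec
  exact ⟨hm, hp⟩

def liftV {n : ℕ} (σ : Finset (Fin n)) (w : { i : Fin n // i ∉ σ } → ℤ) :
    Fin n → ℤ :=
  fun i => if h : i ∉ σ then w ⟨i, h⟩ else 0

lemma projSet_liftV {n : ℕ} (σ : Finset (Fin n)) (w : { i : Fin n // i ∉ σ } → ℤ) :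
    projSet σ (liftV σ w) = w := by
  funext j
  simp [projSet, liftV, j.2]

/-- with `ker(π_σ) ∩ L = {0}` and `S ⊆ L^σ`, `S` is a
generating set of `L^σ` iff `π_σ⁻¹(S)` is a `σ`-generating set of `L`. -/
theorem stmt14 {n : ℕ} (L : AddSubgroup (Fin n → ℤ)) (σ : Finset (Fin n))
    (hker : ∀ u ∈ L, projSet σ u = 0 → u = 0)
    (S : Set ({ i : Fin n // i ∉ σ } → ℤ))
    (hS : ∀ s ∈ S, s ∈ L.map (projSet σ)) :
    IsGenSet (L.map (projSet σ)) S ↔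
      IsGenSetFree L ↑σ {u | u ∈ L ∧ projSet σ u ∈ S} := by
  constructor
  · intro hgen b x y hx hy
    have hxF : inFiber (L.map (projSet σ)) (projSet σ b) (projSet σ x) :=
      ⟨fun j => hx.1 j.1 (by simpa using j.2), by
        rw [← map_sub]; exact AddSubgroup.mem_map.mpr ⟨x - b, hx.2, rfl⟩⟩
    have hyF : inFiber (L.map (projSet σ)) (projSet σ b) (projSet σ y) :=
      ⟨fun j => hy.1 j.1 (by simpa using j.2), by
        rw [← map_sub]; exact AddSubgroup.mem_map.mpr ⟨y - b, hy.2, rfl⟩⟩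
    obtain ⟨k, p, ⟨hpF, hpA⟩, hp0, hpk⟩ := hgen _ _ _ hxF hyF
    have hd : ∀ i < k, p (i+1) - p i ∈ L.map (projSet σ) := by
      intro i hi
      rcases hpA i hi with h | h
      · have h2 := neg_mem (hS _ h)
        simpa using h2
      · exact hS _ h
    set c : ℕ → Fin n → ℤ := fun i => liftEll L σ (p (i+1) - p i) with hc
    have hcL : ∀ i < k, c i ∈ L ∧ projSet σ (c i) = p (i+1) - p i :=
      fun i hi => liftEll_spec L σ (hd i hi)
    set q : ℕ → Fin n → ℤ := fun m => x + ∑ i ∈ Finset.range m, c i with hq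
    have hπq : ∀ m ≤ k, projSet σ (q m) = p m := by
      intro m hm
      have h1 : projSet σ (q m)
          = projSet σ x + ∑ i ∈ Finset.range m, projSet σ (c i) := by
        simp [hq, map_sum]
      rw [h1, Finset.sum_congr rfl
        (fun i hi => (hcL i (lt_of_lt_of_le (Finset.mem_range.mp hi) hm)).2),
        Finset.sum_range_sub, hp0]
      abel
    have hqF : ∀ m ≤ k, inFiberFree L ↑σ b (q m) := by
      intro m hm
      refine ⟨?_, ?_⟩
      · intro i hi
        have hi' : i ∉ σ := fun h => hi (by simpa using h)
        have h1 : q m i = p m ⟨i, hi'⟩ := by rw [← hπq m hm]; rfl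
        rw [h1]
        exact (hpF m hm).1 ⟨i, hi'⟩
      · have h1 : q m - b = (x - b) + ∑ i ∈ Finset.range m, c i := by
          simp [hq]; abel
        rw [h1]
        exact add_mem hx.2 (AddSubgroup.sum_mem _ fun i hi =>
          (hcL i (lt_of_lt_of_le (Finset.mem_range.mp hi) hm)).1)
    have hqA : ∀ i < k, adjS {u | u ∈ L ∧ projSet σ u ∈ S} (q i) (q (i+1)) := by
      intro i hi
      have hstep : q (i+1) - q i = c i := by
        simp [hq, Finset.sum_range_succ]
      rcases hpA i hi with h | h
      · left
        have h2 : q i - q (i+1) = -(c i) := by rw [← hstep]; abel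
        rw [h2]
        exact ⟨neg_mem (hcL i hi).1, by rw [map_neg, (hcL i hi).2, neg_sub]; exact h⟩
      · right
        rw [hstep]
        exact ⟨(hcL i hi).1, by rw [(hcL i hi).2]; exact h⟩
    have hq0 : q 0 = x := by simp [hq]
    have hqk : q k = y := by
      have h1 : q k - y ∈ L := by
        have := sub_mem (hqF k le_rfl).2 hy.2
        simpa using this
      have h2 : projSet σ (q k - y) = 0 := by
        rw [map_sub, hπq k le_rfl, hpk, sub_self]
      exact sub_eq_zero.mp (hker _ h1 h2)
    exact ⟨k, q, ⟨fun i hi => hqF i hi, hqA⟩, hq0, hqk⟩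
  · intro hgen b x y hx hy
    set bl := liftV σ b with hbl
    obtain ⟨hxL, hxπ⟩ := liftEll_spec L σ hx.2
    obtain ⟨hyL, hyπ⟩ := liftEll_spec L σ hy.2
    set x' := bl + liftEll L σ (x - b) with hx'
    set y' := bl + liftEll L σ (y - b) with hy'
    have hπx' : projSet σ x' = x := by
      rw [hx', map_add, projSet_liftV, hxπ]; abel
    have hπy' : projSet σ y' = y := by
      rw [hy', map_add, projSet_liftV, hyπ]; abel
    have hx'F : inFiberFree L ↑σ bl x' := by
      refine ⟨?_, by rw [hx', add_sub_cancel_left]; exact hxL⟩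
      intro i hi
      have hi' : i ∉ σ := fun h => hi (by simpa using h)
      have h1 : x' i = x ⟨i, hi'⟩ := by rw [← hπx']; rfl
      rw [h1]; exact hx.1 _
    have hy'F : inFiberFree L ↑σ bl y' := by
      refine ⟨?_, by rw [hy', add_sub_cancel_left]; exact hyL⟩
      intro i hi
      have hi' : i ∉ σ := fun h => hi (by simpa using h)
      have h1 : y' i = y ⟨i, hi'⟩ := by rw [← hπy']; rfl
      rw [h1]; exact hy.1 _
    obtain ⟨k, q, ⟨hqF, hqA⟩, hq0, hqk⟩ := hgen bl x' y' hx'F hy'F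
    refine ⟨k, fun i => projSet σ (q i), ⟨?_, ?_⟩,
      by show projSet σ (q 0) = x; rw [hq0, hπx'], by show projSet σ (q k) = y; rw [hqk, hπy']⟩
    · intro i hi
      refine ⟨fun j => (hqF i hi).1 j.1 (by simpa using j.2), ?_⟩
      have h1 : projSet σ (q i) - b = projSet σ (q i - bl) := by
        rw [map_sub, hbl, projSet_liftV]
      rw [h1]
      exact AddSubgroup.mem_map.mpr ⟨q i - bl, (hqF i hi).2, rfl⟩
    · intro i hi
      rcases hqA i hi with h | h
      · left; rw [← map_sub]; exact h.2
      · right; rw [← map_sub]; exact h.2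
end

section
/- Let i with ker(π_{i}) ∩ L = {0}, S ⊆ L^{i}, and ≺ a term order. Then π_{i}⁻¹(S) is a ≺_{ē^i}-Gröbner basis of L if and only if S is a ≺_{ω̄^i}-Gröbner basis of L^{i}. -/
open scoped Classical

/-- with `ker(π_i) ∩ L = {0}`, `S ⊆ L^i`, and a term order `≺`
(given compatibly on both spaces), `π_i⁻¹(S)` is a `≺_{ē^i}`-Gröbner basis of
`L` iff `S` is a `≺_{ω̄^i}`-Gröbner basis of `L^i`. -/
theorem stmt15 {n : ℕ} (L : AddSubgroup (Fin (n+1) → ℤ))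
    (hL : ∀ u ∈ L, Nonneg u → u = 0) (i : Fin (n+1))
    (hker : ∀ u ∈ L, projCoord i u = 0 → u = 0)
    (ω : Fin n → ℚ) (hω : ∀ u ∈ L, qdot ω (projCoord i u) = (u i : ℚ))
    (succ : (Fin (n+1) → ℤ) → (Fin (n+1) → ℤ) → Prop)
    (hto : IsTermOrder L succ)
    (succ' : (Fin n → ℤ) → (Fin n → ℤ) → Prop)
    (hto' : IsTermOrder (L.map (projCoord i)) succ')
    (hcompat : ∀ x y : Fin (n+1) → ℤ, x i = y i →
      (succ x y ↔ succ' (projCoord i x) (projCoord i y)))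
    (S : Set (Fin n → ℤ)) (hS : ∀ s ∈ S, s ∈ L.map (projCoord i)) :
    IsGroebner L (fun x y => x i < y i ∨ (x i = y i ∧ succ x y))
        {u | u ∈ L ∧ projCoord i u ∈ S} ↔
      IsGroebner (L.map (projCoord i))
        (fun x y => qdot ω x < qdot ω y ∨ (qdot ω x = qdot ω y ∧ succ' x y))
        S := by
  classical
  have qdot_sub : ∀ a b : Fin n → ℤ, qdot ω (a - b) = qdot ω a - qdot ω b := by
    intro a b
    simp only [qdot, Pi.sub_apply, Int.cast_sub, mul_sub]
    rw [Finset.sum_sub_distrib]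
  have key : ∀ u ∈ L, ∀ a b : Fin n → ℤ, projCoord i u = a - b →
      qdot ω a - qdot ω b = ((u i : ℤ) : ℚ) := by
    intro u hu a b h
    rw [← qdot_sub, ← h, hω u hu]
  have cover : ∀ y : Fin (n+1) → ℤ, 0 ≤ y i →
      (∀ t, 0 ≤ projCoord i y t) → Nonneg y := by
    intro y h0 h1 c
    by_cases hc : c = i
    · subst hc; exact h0
    · obtain ⟨t, ht⟩ := Fin.exists_succAbove_eq hc
      rw [← ht]; exact h1 t
  have transfer : ∀ y z : Fin (n+1) → ℤ, y - z ∈ L →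
      ((y i < z i ∨ (y i = z i ∧ succ y z)) ↔
        (qdot ω (projCoord i y) < qdot ω (projCoord i z) ∨
          (qdot ω (projCoord i y) = qdot ω (projCoord i z) ∧
            succ' (projCoord i y) (projCoord i z)))) := by
    intro y z hmem
    have hkey : qdot ω (projCoord i y) - qdot ω (projCoord i z)
        = ((y i - z i : ℤ) : ℚ) := key _ hmem _ _ (map_sub _ _ _)
    constructor
    · rintro (h | ⟨he, hs⟩)
      · left
        have h2 : ((y i - z i : ℤ) : ℚ) < 0 := by exact_mod_cast sub_neg.mpr h
        linarith
      · right
        refine ⟨?_, (hcompat y z he).mp hs⟩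
        have h2 : ((y i - z i : ℤ) : ℚ) = 0 := by
          exact_mod_cast sub_eq_zero.mpr he
        linarith
    · rintro (h | ⟨he, hs⟩)
      · left
        have h2 : ((y i - z i : ℤ) : ℚ) < 0 := by linarith
        have h3 : y i - z i < 0 := by exact_mod_cast h2
        omega
      · right
        have h2 : ((y i - z i : ℤ) : ℚ) = 0 := by linarith
        have he' : y i = z i := by
          have h3 : y i - z i = 0 := by exact_mod_cast h2
          omega
        exact ⟨he', (hcompat y z he').mpr hs⟩
  constructor
  · -- π⁻¹(S) Gröbner for L  →  S Gröbner for Lⁱ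
    intro hG x' hx'
    obtain ⟨x, hπx, hxi, hxnn⟩ :
        ∃ x : Fin (n+1) → ℤ, projCoord i x = x' ∧ x i = 0 ∧ Nonneg x := by
      refine ⟨i.insertNth 0 x', ?_, ?_, ?_⟩
      · funext t; simp [projCoord]
      · simp
      · refine cover _ (by simp) ?_
        intro t
        simpa [projCoord] using hx' t
    obtain ⟨m, hmm, k, p, hp, hp0, hpk, hdec⟩ := hG x hxnn
    have hfib : ∀ j ≤ k, inFiber L x (p j) := hp.1
    have hπfib : ∀ j ≤ k, inFiber (L.map (projCoord i)) x' (projCoord i (p j)) := by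
      intro j hj
      refine ⟨fun t => (hfib j hj).1 _, ?_⟩
      rw [← hπx, ← map_sub]
      exact AddSubgroup.mem_map_of_mem _ (hfib j hj).2
    have hsub : ∀ j, j < k → p j - p (j+1) ∈ L := by
      intro j hj
      have h1 := (hfib j (le_of_lt hj)).2
      have h2 := (hfib (j+1) hj).2
      have h3 := sub_mem h1 h2
      have h4 : (p j - x) - (p (j+1) - x) = p j - p (j+1) := by abel
      rwa [h4] at h3
    refine ⟨projCoord i m, ⟨?_, ?_⟩, k, fun j => projCoord i (p j),
      ⟨fun j hj => hπfib j hj, ?_⟩,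
      by show projCoord i (p 0) = x'; rw [hp0, hπx],
      by show projCoord i (p k) = projCoord i m; rw [hpk],
      fun j hj => (transfer _ _ (hsub j hj)).mp (hdec j hj)⟩
    · rw [← hpk]; exact hπfib k le_rfl
    · -- minimality of projCoord i m
      intro y' hy' hne
      obtain ⟨u, huL, huπ⟩ := AddSubgroup.mem_map.mp hy'.2
      by_cases hlt : qdot ω y' < qdot ω (projCoord i m)
      · exact Or.inl hlt
      · push_neg at hlt
        have hmL : m - x ∈ L := hmm.1.2
        have hqm : qdot ω (projCoord i m) - qdot ω x' = ((m i - x i : ℤ) : ℚ) :=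
          key _ hmL _ _ (by rw [map_sub, hπx])
        have hx'le : qdot ω x' ≤ qdot ω (projCoord i m) := by
          have h0 : 0 ≤ m i - x i := by
            have := hmm.1.1 i
            omega
          have h1 : (0 : ℚ) ≤ ((m i - x i : ℤ) : ℚ) := by exact_mod_cast h0
          linarith
        have hui : 0 ≤ u i := by
          have hq : qdot ω y' - qdot ω x' = ((u i : ℤ) : ℚ) :=
            key u huL y' x' huπ
          have h1 : (0 : ℚ) ≤ ((u i : ℤ) : ℚ) := by linarith
          exact_mod_cast h1
        set y := x + u with hy
        have hπy : projCoord i y = y' := by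
          rw [hy, map_add, hπx, huπ]; abel
        have hyF : inFiber L x y := by
          refine ⟨cover y ?_ ?_, by rw [hy]; simpa using huL⟩
          · show 0 ≤ x i + u i
            omega
          · intro t; rw [hπy]; exact hy'.1 t
        have hyne : y ≠ m := by
          intro h; exact hne (by rw [← hπy, h])
        have hym : y - m ∈ L := by
          have h4 : y - m = u - (m - x) := by rw [hy]; abel
          rw [h4]; exact sub_mem huL hmL
        have := (transfer y m hym).mp (hmm.2 y hyF hyne)
        rwa [hπy] at this
    · -- adjacency of projected path
      intro j hj
      rcases hp.2 j hj with h | h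
      · left
        rw [← map_sub]
        exact h.2
      · right
        rw [← map_sub]
        exact h.2
  · -- S Gröbner for Lⁱ  →  π⁻¹(S) Gröbner for L
    intro hS' x hx
    have hx' : Nonneg (projCoord i x) := fun t => hx _
    obtain ⟨m', hmm', k, p', hp', hp'0, hp'k, hdec'⟩ := hS' (projCoord i x) hx'
    have hfib' : ∀ j ≤ k, inFiber (L.map (projCoord i)) (projCoord i x) (p' j) := hp'.1
    have hex : ∀ j : ℕ, ∃ v, v ∈ L ∧
        projCoord i v = p' (min j k) - projCoord i x := by
      intro j
      have h1 := (hfib' (min j k) (min_le_right j k)).2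
      exact AddSubgroup.mem_map.mp h1
    choose u huL huπ using hex
    have humin : ∀ j ≤ k, min j k = j := fun j hj => min_eq_left hj
    have hmono : ∀ j, j ≤ k → qdot ω (projCoord i x) ≤ qdot ω (p' j) := by
      intro j
      induction j with
      | zero => intro _; rw [hp'0]
      | succ j ih =>
        intro hj
        have h1 := ih (by omega)
        rcases hdec' j (by omega) with h | ⟨he, _⟩
        · linarith
        · linarith
    have hui : ∀ j ≤ k, 0 ≤ u j i := by
      intro j hj
      have hq : qdot ω (p' j) - qdot ω (projCoord i x) = ((u j i : ℤ) : ℚ) :=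
        key (u j) (huL j) (p' j) (projCoord i x) (by rw [huπ j, humin j hj])
      have h2 := hmono j hj
      have h1 : (0 : ℚ) ≤ ((u j i : ℤ) : ℚ) := by linarith
      exact_mod_cast h1
    have hπp : ∀ j ≤ k, projCoord i (x + u j) = p' j := by
      intro j hj
      rw [map_add, huπ j, humin j hj]; abel
    have hfib : ∀ j ≤ k, inFiber L x (x + u j) := by
      intro j hj
      refine ⟨cover _ ?_ ?_, by simpa using huL j⟩
      · show 0 ≤ x i + u j i
        have h1 := hx i
        have h2 := hui j hj
        omega
      · intro t; rw [hπp j hj]; exact (hfib' j hj).1 t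
    have hstepmem : ∀ j l, u j - u l ∈ L := fun j l => sub_mem (huL j) (huL l)
    have hstepπ : ∀ j ≤ k, ∀ l ≤ k, projCoord i (u j - u l) = p' j - p' l := by
      intro j hj l hl
      rw [map_sub, huπ j, huπ l, humin j hj, humin l hl]; abel
    refine ⟨x + u k, ⟨hfib k le_rfl, ?_⟩, k, fun j => x + u j,
      ⟨fun j hj => hfib j hj, ?_⟩, ?_, rfl, ?_⟩
    · -- minimality of x + u k
      intro y hyF hyne
      have hπyF : inFiber (L.map (projCoord i)) (projCoord i x) (projCoord i y) := by
        refine ⟨fun t => hyF.1 _, ?_⟩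
        rw [← map_sub]
        exact AddSubgroup.mem_map_of_mem _ hyF.2
      have hymem : y - (x + u k) ∈ L := by
        have h4 : y - (x + u k) = (y - x) - u k := by abel
        rw [h4]; exact sub_mem hyF.2 (huL k)
      have hπne : projCoord i y ≠ m' := by
        intro h
        apply hyne
        have h0 : projCoord i (y - (x + u k)) = 0 := by
          rw [map_sub, hπp k le_rfl, hp'k, h, sub_self]
        exact sub_eq_zero.mp (hker _ hymem h0)
      have hs2 := hmm'.2 (projCoord i y) hπyF hπne
      refine (transfer y (x + u k) hymem).mpr ?_
      rwa [hπp k le_rfl, hp'k]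
    · -- adjacency
      intro j hj
      rcases hp'.2 j hj with h | h
      · left
        have h4 : (x + u j) - (x + u (j+1)) = u j - u (j+1) := by abel
        rw [h4]
        exact ⟨hstepmem j (j+1), by
          rw [hstepπ j (le_of_lt hj) (j+1) hj]; exact h⟩
      · right
        have h4 : (x + u (j+1)) - (x + u j) = u (j+1) - u j := by abel
        rw [h4]
        exact ⟨hstepmem (j+1) j, by
          rw [hstepπ (j+1) hj j (le_of_lt hj)]; exact h⟩
    · -- p 0 = x
      have h0 : u 0 = 0 := by
        apply hker _ (huL 0)
        rw [huπ 0, humin 0 (Nat.zero_le k), hp'0, sub_self]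
      show x + u 0 = x
      rw [h0, add_zero]
    · -- decreasing
      intro j hj
      have hmem : (x + u j) - (x + u (j+1)) ∈ L := by
        have h4 : (x + u j) - (x + u (j+1)) = u j - u (j+1) := by abel
        rw [h4]; exact hstepmem j (j+1)
      refine (transfer _ _ hmem).mpr ?_
      rw [hπp j (le_of_lt hj), hπp (j+1) hj]
      exact hdec' j hj
end

section
/- If S ⊆ L contains a nonzero vector u ∈ L ∩ ℕ^n, then S is supp(u)-saturated on S. -/
open scoped Classical

/-- if `S ⊆ L` contains a nonzero `u ∈ L ∩ ℕ^n`, then `S` is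
`supp(u)`-saturated on `S`. -/
theorem stmt16 {n : ℕ} (L : AddSubgroup (Fin n → ℤ))
    (S : Set (Fin n → ℤ)) (hS : ∀ s ∈ S, s ∈ L)
    (u : Fin n → ℤ) (hu : u ∈ S) (huL : u ∈ L)
    (hnn : Nonneg u) (hne : u ≠ 0) :
    IsSaturatedOn L (suppV u) S S := by

  intro b x y hx hy hconn
  obtain ⟨k, p, ⟨hfib, hadj⟩, hp0, hpk⟩ := hconn
  set γ : Fin n → ℤ := meetOn (suppV u) x y with hγdef
  have hγnn : ∀ i, 0 ≤ γ i := by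
    intro i
    simp only [hγdef, meetOn]
    split
    · exact le_min (hx.1 i) (hy.1 i)
    · exact le_refl 0
  have hxγ : ∀ i, γ i ≤ x i := by
    intro i; simp only [hγdef, meetOn]; split
    · exact min_le_left _ _
    · exact hx.1 i
  have hyγ : ∀ i, γ i ≤ y i := by
    intro i; simp only [hγdef, meetOn]; split
    · exact min_le_right _ _
    · exact hy.1 i
  have hγzero : ∀ i, u i = 0 → γ i = 0 := by
    intro i hi; simp [hγdef, meetOn, suppV, hi]
  set M : ℕ := Finset.univ.sup (fun i => (γ i).toNat) with hMdef
  have hM : ∀ i, γ i ≤ (M : ℤ) * u i := by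
    intro i
    by_cases hui : u i = 0
    · rw [hγzero i hui, hui]; simp
    · have h1 : (1 : ℤ) ≤ u i := lt_of_le_of_ne (hnn i) (Ne.symm hui)
      have h2 : γ i ≤ (M : ℤ) := by
        calc γ i ≤ ((γ i).toNat : ℤ) := Int.self_le_toNat _
          _ ≤ (M : ℤ) := by
              exact_mod_cast Finset.le_sup (f := fun i => (γ i).toNat)
                (Finset.mem_univ i)
      calc γ i ≤ (M : ℤ) := h2
        _ ≤ (M : ℤ) * u i := le_mul_of_one_le_right (by positivity) h1
  set K : ℕ := M + k + M with hKdef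
  set q : ℕ → Fin n → ℤ := fun j =>
    if j < M then fun i => x i - γ i + (j : ℤ) * u i
    else if j ≤ M + k then fun i => p (j - M) i + (M : ℤ) * u i - γ i
    else fun i => y i - γ i + ((M + M + k - j : ℕ) : ℤ) * u i with hqdef
  have qB : ∀ j, M ≤ j → j ≤ M + k →
      q j = fun i => p (j - M) i + (M : ℤ) * u i - γ i := by
    intro j h1 h2
    simp only [hqdef, Nat.not_lt.mpr h1, if_false, h2, if_true]
  have qA : ∀ j, j ≤ M → q j = fun i => x i - γ i + (j : ℤ) * u i := by
    intro j hj
    rcases lt_or_eq_of_le hj with h | h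
    · simp only [hqdef, h, if_true]
    · subst h
      rw [qB M le_rfl (Nat.le_add_right _ _)]
      funext i
      simp only [Nat.sub_self, hp0]
      ring
  have qC : ∀ j, M + k ≤ j → j ≤ K →
      q j = fun i => y i - γ i + ((K - j : ℕ) : ℤ) * u i := by
    intro j h1 h2
    rcases lt_or_eq_of_le h1 with h | h
    · have hnotlt : ¬ j < M := by omega
      have hnotle : ¬ j ≤ M + k := by omega
      simp only [hqdef, hnotlt, if_false, hnotle]
      have : M + M + k - j = K - j := by omega
      rw [this]
    · subst h
      rw [qB _ (Nat.le_add_right _ _) le_rfl]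
      funext i
      have : K - (M + k) = M := by omega
      rw [this]
      have : M + k - M = k := by omega
      rw [this, hpk]
      ring
  have hzsmul : ∀ (c : ℤ), (fun i => c * u i) ∈ L := by
    intro c
    have : (fun i => c * u i) = c • u := by
      funext i; simp [Pi.smul_apply, smul_eq_mul]
    rw [this]
    exact AddSubgroup.zsmul_mem L huL c
  refine ⟨K, q, ⟨?_, ?_⟩, ?_, ?_⟩
  · -- fiber membership
    intro j hj
    by_cases h1 : j ≤ M
    · rw [qA j h1]
      constructor
      · intro i
        have := hxγ i
        have : 0 ≤ (j : ℤ) * u i := mul_nonneg (by positivity) (hnn i)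
        simp only
        omega
      · have : (fun i => x i - γ i + (j : ℤ) * u i) - (b - γ) =
            (x - b) + fun i => (j : ℤ) * u i := by
          funext i; simp [Pi.sub_apply, Pi.add_apply]; ring
        rw [this]
        exact L.add_mem hx.2 (hzsmul _)
    · by_cases h2 : j ≤ M + k
      · rw [qB j (by omega) h2]
        have hp := hfib (j - M) (by omega)
        constructor
        · intro i
          have h3 := hp.1 i
          have h4 := hM i
          simp only
          omega
        · have : (fun i => p (j - M) i + (M : ℤ) * u i - γ i) - (b - γ) =
              (p (j - M) - b) + fun i => (M : ℤ) * u i := by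
            funext i; simp [Pi.sub_apply, Pi.add_apply]; ring
          rw [this]
          exact L.add_mem hp.2 (hzsmul _)
      · rw [qC j (by omega) hj]
        constructor
        · intro i
          have := hyγ i
          have : 0 ≤ ((K - j : ℕ) : ℤ) * u i := mul_nonneg (by positivity) (hnn i)
          simp only
          omega
        · have : (fun i => y i - γ i + ((K - j : ℕ) : ℤ) * u i) - (b - γ) =
              (y - b) + fun i => ((K - j : ℕ) : ℤ) * u i := by
            funext i; simp [Pi.sub_apply, Pi.add_apply]; ring
          rw [this]
          exact L.add_mem hy.2 (hzsmul _)
  · -- adjacency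
    intro j hj
    by_cases h1 : j + 1 ≤ M
    · right
      rw [qA j (by omega), qA (j + 1) h1]
      have : ((fun i => x i - γ i + ((j + 1 : ℕ) : ℤ) * u i) -
          fun i => x i - γ i + (j : ℤ) * u i) = u := by
        funext i; simp [Pi.sub_apply]; push_cast; ring
      rw [this]; exact hu
    · by_cases h2 : j + 1 ≤ M + k
      · rw [qB j (by omega) (by omega), qB (j + 1) (by omega) h2]
        have hstep : j + 1 - M = (j - M) + 1 := by omega
        rw [hstep]
        have := hadj (j - M) (by omega)
        rcases this with h | h
        · left
          have : ((fun i => p (j - M) i + (M : ℤ) * u i - γ i) -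
              fun i => p (j - M + 1) i + (M : ℤ) * u i - γ i) =
              p (j - M) - p (j - M + 1) := by
            funext i; simp [Pi.sub_apply]
          rw [this]; exact h
        · right
          have : ((fun i => p (j - M + 1) i + (M : ℤ) * u i - γ i) -
              fun i => p (j - M) i + (M : ℤ) * u i - γ i) =
              p (j - M + 1) - p (j - M) := by
            funext i; simp [Pi.sub_apply]
          rw [this]; exact h
      · left
        rw [qC j (by omega) (by omega), qC (j + 1) (by omega) (by omega)]
        have hc : (K - j : ℕ) = (K - (j + 1)) + 1 := by omega
        have : ((fun i => y i - γ i + ((K - j : ℕ) : ℤ) * u i) -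
            fun i => y i - γ i + ((K - (j + 1) : ℕ) : ℤ) * u i) = u := by
          funext i
          simp only [Pi.sub_apply, hc]
          push_cast
          ring
        rw [this]; exact hu
  · -- q 0 = x - γ
    rw [qA 0 (Nat.zero_le _)]
    funext i; simp [Pi.sub_apply]
  · -- q K = y - γ
    rw [qC K (by omega) le_rfl]
    funext i; simp [Pi.sub_apply]
end

section
/- If S is a σ-generating set of L and S contains a nonzero u ∈ L ∩ ℕ^n, then S is a (σ ∖ supp(u))-generating set of L. -/
open scoped Classical

/-- if `S` is a `σ`-generating set of `L` containing a nonzero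
`u ∈ L ∩ ℕ^n`, then `S` is a `(σ ∖ supp(u))`-generating set of `L`. -/
theorem stmt17 {n : ℕ} (L : AddSubgroup (Fin n → ℤ))
    (σ : Set (Fin n)) (S : Set (Fin n → ℤ)) (hS : ∀ s ∈ S, s ∈ L)
    (hgen : IsGenSetFree L σ S)
    (u : Fin n → ℤ) (hu : u ∈ S) (huL : u ∈ L)
    (hnn : Nonneg u) (hne : u ≠ 0) :
    IsGenSetFree L (σ \ suppV u) S := by
  intro b x y hx hy
  have hsub : ∀ z : Fin n → ℤ, inFiberFree L (σ \ suppV u) b z → inFiberFree L σ b z := by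
    intro z hz
    exact ⟨fun i hi => hz.1 i (fun h => hi h.1), hz.2⟩
  obtain ⟨k, p, ⟨hmem, hadj⟩, hp0, hpk⟩ := hgen b x y (hsub x hx) (hsub y hy)
  set N : ℕ := (Finset.range (k+1)).sup fun i => Finset.univ.sup fun j => (-(p i j)).toNat
    with hNdef
  have hNbound : ∀ i ≤ k, ∀ j, -(p i j) ≤ (N : ℤ) := by
    intro i hi j
    have h1 : (-(p i j)).toNat ≤ N := by
      calc (-(p i j)).toNat ≤ Finset.univ.sup fun j => (-(p i j)).toNat :=
            Finset.le_sup (f := fun j => (-(p i j)).toNat) (Finset.mem_univ j)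
        _ ≤ N := Finset.le_sup (f := fun i => Finset.univ.sup fun j => (-(p i j)).toNat)
            (Finset.mem_range.mpr (Nat.lt_succ_of_le hi))
    calc -(p i j) ≤ ((-(p i j)).toNat : ℤ) := Int.self_le_toNat _
      _ ≤ (N : ℤ) := by exact_mod_cast h1
  have hu1 : ∀ j, j ∈ suppV u → 1 ≤ u j := by
    intro j hj
    have := hnn j
    have : u j ≠ 0 := hj
    omega
  -- the shifted path
  set p' : ℕ → Fin n → ℤ := fun i =>
    if i ≤ N then x + (i : ℤ) • u
    else if i ≤ N + k then p (i - N) + (N : ℤ) • u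
    else y + ((2*N + k - i : ℕ) : ℤ) • u with hp'def
  have hfirst : ∀ i ≤ N, p' i = x + (i : ℤ) • u := by
    intro i hi; simp [hp'def, hi]
  have hmid : ∀ i, N ≤ i → i ≤ N + k → p' i = p (i - N) + (N : ℤ) • u := by
    intro i h1 h2
    by_cases h : i ≤ N
    · have : i = N := le_antisymm h h1
      subst this
      simp [hp'def, hp0]
    · simp [hp'def, h, h2]
  have hlast : ∀ i, N + k ≤ i → i ≤ 2*N + k → p' i = y + ((2*N + k - i : ℕ) : ℤ) • u := by
    intro i h1 h2
    by_cases h : i ≤ N + k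
    · have hik : i = N + k := le_antisymm h h1
      subst hik
      have h1' : N + k - N = k := by omega
      have h2' : 2*N + k - (N + k) = N := by omega
      rw [hmid _ (by omega) le_rfl, h1', h2', hpk]
    · simp only [hp'def]
      rw [if_neg (by omega), if_neg h]
  -- nonnegativity facts
  have hx1 : ∀ j, j ∉ σ \ suppV u → 0 ≤ x j := hx.1
  have hy1 : ∀ j, j ∉ σ \ suppV u → 0 ≤ y j := hy.1
  have hshift : ∀ (w : Fin n → ℤ), (∀ j, j ∉ σ \ suppV u → 0 ≤ w j) →
      ∀ (c : ℕ), ∀ j, j ∉ σ \ suppV u → 0 ≤ (w + (c : ℤ) • u) j := by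
    intro w hw c j hj
    have h1 := hw j hj
    have h2 : 0 ≤ (c : ℤ) * u j := mul_nonneg (by positivity) (hnn j)
    simpa [Pi.add_apply, Pi.smul_apply, smul_eq_mul] using add_nonneg h1 h2
  have hLshift : ∀ (w : Fin n → ℤ), w - b ∈ L → ∀ c : ℤ, (w + c • u) - b ∈ L := by
    intro w hw c
    have : (w + c • u) - b = (w - b) + c • u := by abel
    rw [this]
    exact L.add_mem hw (AddSubgroup.zsmul_mem L huL c)
  refine ⟨N + k + N, p', ⟨?_, ?_⟩, ?_, ?_⟩
  · -- fiber membership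
    intro i hi
    by_cases h1 : i ≤ N
    · rw [hfirst i h1]
      exact ⟨hshift x hx1 i, hLshift x hx.2 i⟩
    · by_cases h2 : i ≤ N + k
      · rw [hmid i (by omega) h2]
        have hik : i - N ≤ k := by omega
        constructor
        · intro j hj
          by_cases hjs : j ∈ suppV u
          · have h3 := hNbound (i - N) hik j
            have h4 := hu1 j hjs
            have h5 : (N : ℤ) * 1 ≤ (N : ℤ) * u j :=
              mul_le_mul_of_nonneg_left h4 (by positivity)
            simp only [Pi.add_apply, Pi.smul_apply, smul_eq_mul]
            omega
          · have hjσ : j ∉ σ := fun hjσ => hj ⟨hjσ, hjs⟩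
            have h3 := (hmem (i - N) hik).1 j hjσ
            have h4 : 0 ≤ (N : ℤ) * u j := mul_nonneg (by positivity) (hnn j)
            simp only [Pi.add_apply, Pi.smul_apply, smul_eq_mul]
            omega
        · exact hLshift _ (hmem (i - N) hik).2 _
      · rw [hlast i (by omega) (by omega)]
        exact ⟨hshift y hy1 _, hLshift y hy.2 _⟩
  · -- adjacency
    intro i hi
    by_cases h1 : i < N
    · right
      have e : p' (i+1) - p' i = u := by
        rw [hfirst i (by omega), hfirst (i+1) (by omega)]
        have : ((i + 1 : ℕ) : ℤ) • u = (i : ℤ) • u + u := by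
          push_cast
          rw [add_smul, one_smul]
        rw [this]
        abel
      rw [e]; exact hu
    · by_cases h2 : i < N + k
      · have e1 : p' i - p' (i+1) = p (i - N) - p (i - N + 1) := by
          rw [hmid i (by omega) (by omega), hmid (i+1) (by omega) (by omega)]
          have : i + 1 - N = i - N + 1 := by omega
          rw [this]
          abel
        have e2 : p' (i+1) - p' i = p (i - N + 1) - p (i - N) := by
          rw [hmid i (by omega) (by omega), hmid (i+1) (by omega) (by omega)]
          have : i + 1 - N = i - N + 1 := by omega
          rw [this]
          abel
        rcases hadj (i - N) (by omega) with h | h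
        · exact Or.inl (e1 ▸ h)
        · exact Or.inr (e2 ▸ h)
      · left
        have e : p' i - p' (i+1) = u := by
          rw [hlast i (by omega) (by omega), hlast (i+1) (by omega) (by omega)]
          have h3 : (2*N + k - i : ℕ) = (2*N + k - (i+1) : ℕ) + 1 := by omega
          rw [h3]
          have : (((2*N + k - (i+1) : ℕ) + 1 : ℕ) : ℤ) • u
              = ((2*N + k - (i+1) : ℕ) : ℤ) • u + u := by
            push_cast
            rw [add_smul, one_smul]
          rw [this]
          abel
        rw [e]; exact hu
  · rw [hfirst 0 (by omega)]
    simp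
  · rw [hlast (N + k + N) (by omega) (by omega)]
    have : (2*N + k - (N + k + N) : ℕ) = 0 := by omega
    rw [this]
    simp
end

section
/- Let G be a generating set of L. Then G ⊆ L_≻ is a ≻-Gröbner basis of L if and only if for each pair u, v ∈ G with supp(x^(u,v)) ∩ supp(y^(u,v)) = ∅, there exists a ≻-reduction path between x^(u,v) and y^(u,v) in G(F_{L, z^(u,v)}, G). (Cancellation criterion: critical pairs with overlapping negative supports may be discarded.) -/
open scoped Classical

/-!
Both sides are equivalent to: any two points of a fiber are joined by a reduction path.
Take a path between two points and its highest node `z`. If `z` lies above both ends, every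
visit of `z` sits on a critical path `x — z — y` with `u = z - x` and `v = z - y` in `G`, and
`(x, z, y)` is the translate by `z - z^(u,v) ≥ 0` of `(x^(u,v), z^(u,v), y^(u,v))`. When the
negative supports of `u` and `v` are disjoint, the given reduction path translates to a path
strictly below `z`; otherwise `x` and `y` share a coordinate `j`, and a reduction path between
`x - e_j` and `y - e_j`, whose fiber has smaller coordinate sums, translates instead. Replacing
every visit of `z` lowers the highest node. Both inductions terminate because fibers are
finite, by Dickson's lemma and `L ∩ ℕⁿ = {0}`.
-/

section Paths

variable {ι : Type*} {L : AddSubgroup (ι → ℤ)} {S : Set (ι → ℤ)}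
  {b x y w : ι → ℤ}

lemma inFiber_congr {b' : ι → ℤ} (hb : b - b' ∈ L) : inFiber L b w ↔ inFiber L b' w := by
  refine and_congr_right fun _ => ⟨fun h => ?_, fun h => ?_⟩
  · simpa using L.add_mem h hb
  · simpa using L.sub_mem h hb

lemma inFiber_self (hx : Nonneg x) : inFiber L x x := ⟨hx, by simp⟩

lemma adjS.symm (h : adjS S x y) : adjS S y x := Or.symm h

def PathWithin (L : AddSubgroup (ι → ℤ)) (S : Set (ι → ℤ)) (b : ι → ℤ)
    (P : (ι → ℤ) → Prop) (x y : ι → ℤ) : Prop :=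
  ∃ k p, IsPathIn L S b k p ∧ p 0 = x ∧ p k = y ∧ ∀ i ≤ k, P (p i)

variable {P Q : (ι → ℤ) → Prop}

namespace PathWithin

lemma inFiber_left (h : PathWithin L S b P x y) : inFiber L b x := by
  obtain ⟨k, p, hp, rfl, -, -⟩ := h
  exact hp.1 0 k.zero_le

lemma refl (hx : inFiber L b x) (hP : P x) : PathWithin L S b P x x :=
  ⟨0, fun _ => x, ⟨fun _ _ => hx, fun _ h => absurd h (Nat.not_lt_zero _)⟩, rfl, rfl,
    fun _ _ => hP⟩

lemma of_adjS (hx : inFiber L b x) (hy : inFiber L b y) (hxy : adjS S x y)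
    (hPx : P x) (hPy : P y) : PathWithin L S b P x y := by
  refine ⟨1, fun i => if i = 0 then x else y, ⟨fun i _ => ?_, fun i hi => ?_⟩, rfl, rfl,
    fun i _ => ?_⟩
  · dsimp only; split_ifs <;> assumption
  · obtain rfl : i = 0 := by omega
    simpa using hxy
  · dsimp only; split_ifs <;> assumption

lemma mono (h : PathWithin L S b P x y) (hPQ : ∀ w, inFiber L b w → P w → Q w) :
    PathWithin L S b Q x y := by
  obtain ⟨k, p, hp, h0, hk, hP⟩ := h
  exact ⟨k, p, hp, h0, hk, fun i hi => hPQ _ (hp.1 i hi) (hP i hi)⟩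

lemma symm (h : PathWithin L S b P x y) : PathWithin L S b P y x := by
  obtain ⟨k, p, hp, h0, hk, hP⟩ := h
  refine ⟨k, fun i => p (k - i), ⟨fun i _ => hp.1 _ (Nat.sub_le k i), fun i hi => ?_⟩,
    by simpa using hk, by simpa using h0, fun i _ => hP _ (Nat.sub_le k i)⟩
  have e : k - i = k - (i + 1) + 1 := by omega
  simpa only [e] using (hp.2 (k - (i + 1)) (by omega)).symm

lemma trans {z : ι → ℤ} (h₁ : PathWithin L S b P x y) (h₂ : PathWithin L S b P y z) :
    PathWithin L S b P x z := by
  obtain ⟨k, p, hp, hp0, hpk, hpP⟩ := h₁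
  obtain ⟨l, q, hq, hq0, hql, hqP⟩ := h₂
  set r : ℕ → ι → ℤ := fun i => if i ≤ k then p i else q (i - k)
  have hr : ∀ i, k ≤ i → r i = q (i - k) := by
    intro i hi
    by_cases hik : i ≤ k
    · obtain rfl : i = k := by omega
      simp [r, hpk, hq0]
    · simp [r, hik]
  have hrp : ∀ i ≤ k, r i = p i := fun i hi => if_pos hi
  refine ⟨k + l, r, ⟨fun i hi => ?_, fun i hi => ?_⟩, by simp [r, hp0], by simp [hr, hql],
    fun i hi => ?_⟩
  · rcases le_total i k with hik | hki
    · exact hrp i hik ▸ hp.1 i hik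
    · exact hr i hki ▸ hq.1 _ (by omega)
  · rcases lt_or_ge i k with hik | hki
    · rw [hrp i hik.le, hrp (i + 1) hik]
      exact hp.2 i hik
    · rw [hr i hki, hr (i + 1) (by omega), show i + 1 - k = i - k + 1 by omega]
      exact hq.2 _ (by omega)
  · rcases le_total i k with hik | hki
    · exact hrp i hik ▸ hpP i hik
    · exact hr i hki ▸ hqP _ (by omega)

lemma rebase {b' : ι → ℤ} (h : PathWithin L S b P x y) (hb : b - b' ∈ L) :
    PathWithin L S b' P x y := by
  obtain ⟨k, p, hp, h0, hk, hP⟩ := h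
  exact ⟨k, p, ⟨fun i hi => (inFiber_congr hb).1 (hp.1 i hi), hp.2⟩, h0, hk, hP⟩

lemma translate {b' γ : ι → ℤ} (h : PathWithin L S b P x y) (hγ : Nonneg γ)
    (hb : x + γ - b' ∈ L) (hPQ : ∀ w, inFiber L b w → P w → Q (w + γ)) :
    PathWithin L S b' Q (x + γ) (y + γ) := by
  have hx := h.inFiber_left
  obtain ⟨k, p, hp, rfl, rfl, hP⟩ := h
  refine ⟨k, fun i => p i + γ, ⟨fun i hi => ⟨fun j => ?_, ?_⟩, fun i hi => ?_⟩, rfl, rfl,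
    fun i hi => hPQ _ (hp.1 i hi) (hP i hi)⟩
  · exact add_nonneg ((hp.1 i hi).1 j) (hγ j)
  · have e : p i + γ - b' = (p i - b) - (p 0 - b) + (p 0 + γ - b') := by abel
    rw [e]
    exact L.add_mem (L.sub_mem (hp.1 i hi).2 hx.2) hb
  · simpa only [adjS, add_sub_add_right_eq_sub] using hp.2 i hi

end PathWithin

lemma ConnIn.pathWithin (h : ConnIn L S b x y) : PathWithin L S b (fun _ => True) x y := by
  obtain ⟨k, p, hp, h0, hk⟩ := h
  exact ⟨k, p, hp, h0, hk, fun _ _ => trivial⟩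

end Paths

section TermOrder

variable {ι : Type*} {L : AddSubgroup (ι → ℤ)} {succ : (ι → ℤ) → (ι → ℤ) → Prop}
  {S G : Set (ι → ℤ)} {P : (ι → ℤ) → Prop} {b x y z w : ι → ℤ}

namespace IsTermOrder

lemma asymm (hto : IsTermOrder L succ) (h : succ x y) : ¬ succ y x :=
  fun h' => hto.irrefl x (hto.trans h h')

lemma not_succ_of_eq_or_succ (hto : IsTermOrder L succ) (h : w = z ∨ succ z w) :
    ¬ succ w z := by
  rcases h with rfl | h
  · exact hto.irrefl w
  · exact hto.asymm h

lemma succ_of_eq_or_succ_of_succ (hto : IsTermOrder L succ) (h : w = z ∨ succ z w)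
    (h' : succ w x) : succ z x := by
  rcases h with rfl | h
  · exact h'
  · exact hto.trans h h'

lemma eq_or_succ_of_not_succ (hto : IsTermOrder L succ) (hx : inFiber L b x)
    (hy : inFiber L b y) (h : ¬ succ x y) : x = y ∨ succ y x := by
  by_cases hxy : x = y
  · exact Or.inl hxy
  · exact Or.inr ((hto.total b x y hx hy hxy).resolve_left h)

/-- With `g = x - y`: `x = g⁺ + min(x, y)` and `y = g⁻ + min(x, y)`. -/
lemma succ_of_sub_mem_Lpos (hto : IsTermOrder L succ) (hx : Nonneg x) (hy : Nonneg y)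
    (h : x - y ∈ Lpos L succ) : succ x y := by
  have hmin : Nonneg fun i => min (x i) (y i) := fun i => le_min (hx i) (hy i)
  have hpos : vposPart (x - y) + (fun i => min (x i) (y i)) = x := by
    ext i; simp only [vposPart, Pi.add_apply, Pi.sub_apply]; omega
  have hneg : vnegPart (x - y) + (fun i => min (x i) (y i)) = y := by
    ext i; simp only [vnegPart, Pi.add_apply, Pi.sub_apply]; omega
  simpa only [hpos, hneg] using hto.additive _ _ _ hmin h.2

lemma zero_notMem_Lpos (hto : IsTermOrder L succ) : (0 : ι → ℤ) ∉ Lpos L succ := by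
  rintro ⟨-, h⟩
  have e₁ : vposPart (0 : ι → ℤ) = 0 := funext fun _ => by simp [vposPart]
  have e₂ : vnegPart (0 : ι → ℤ) = 0 := funext fun _ => by simp [vnegPart]
  rw [e₁, e₂] at h
  exact hto.irrefl 0 h

lemma ne_of_adjS (hto : IsTermOrder L succ) (hG : G ⊆ Lpos L succ) (h : adjS G x y) :
    x ≠ y := by
  rintro rfl
  rcases h with h | h <;> exact hto.zero_notMem_Lpos (hG (by simpa using h))

lemma sub_mem_of_adjS_of_succ (hto : IsTermOrder L succ) (hG : G ⊆ Lpos L succ)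
    (hx : Nonneg x) (hy : Nonneg y) (h : adjS G x y) (hs : succ x y) : x - y ∈ G :=
  h.resolve_right fun h' => hto.asymm hs (hto.succ_of_sub_mem_Lpos hy hx (hG h'))

end IsTermOrder

lemma PathWithin.exists_max (hto : IsTermOrder L succ) (h : PathWithin L S b P x y) :
    ∃ z, inFiber L b z ∧ P z ∧ PathWithin L S b (fun w => w = z ∨ succ z w) x y := by
  obtain ⟨k, p, hp, h0, hk, hP⟩ := h
  have : IsStrictOrder (ι → ℤ) succ :=
    { irrefl := hto.irrefl, trans := fun _ _ _ => hto.trans }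
  have hfin : (p '' Set.Iic k).Finite := (Set.finite_Iic k).image p
  obtain ⟨_, ⟨i₀, hi₀, rfl⟩, hmax⟩ :=
    (Set.wellFoundedOn_iff.1 (hfin.wellFoundedOn (r := succ))).has_min (p '' Set.Iic k)
      ⟨p 0, 0, k.zero_le, rfl⟩
  refine ⟨p i₀, hp.1 i₀ hi₀, hP i₀ hi₀, k, p, hp, h0, hk, fun i hi => ?_⟩
  refine hto.eq_or_succ_of_not_succ (hp.1 i hi) (hp.1 i₀ hi₀) fun hs => ?_
  exact hmax _ ⟨i, hi, rfl⟩ ⟨hs, ⟨i, hi, rfl⟩, ⟨i₀, hi₀, rfl⟩⟩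

lemma isRedPath_of_pathWithin (h : PathWithin L G b (fun w => ¬ (succ w x ∧ succ w y)) x y) :
    IsRedPath L G b succ x y := by
  obtain ⟨k, p, hp, h0, hk, hP⟩ := h
  exact ⟨k, p, hp, h0, hk, fun i _ hi => hP i hi.le⟩

lemma IsRedPath.pathWithin (hto : IsTermOrder L succ) (h : IsRedPath L G b succ x y) :
    PathWithin L G b (fun w => ¬ (succ w x ∧ succ w y)) x y := by
  obtain ⟨k, p, hp, h0, hk, hred⟩ := h
  refine ⟨k, p, hp, h0, hk, fun i hi => ?_⟩
  rcases Nat.eq_zero_or_pos i with rfl | hi₀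
  · exact fun hs => hto.irrefl x (h0 ▸ hs.1)
  rcases hi.lt_or_eq with hik | rfl
  · exact hred i hi₀ hik
  · exact fun hs => hto.irrefl y (hk ▸ hs.2)

end TermOrder

section Groebner

variable {ι : Type*} {L : AddSubgroup (ι → ℤ)} {succ : (ι → ℤ) → (ι → ℤ) → Prop}
  {G : Set (ι → ℤ)} {b y m : ι → ℤ}

def HasRedPaths (L : AddSubgroup (ι → ℤ)) (G : Set (ι → ℤ))
    (succ : (ι → ℤ) → (ι → ℤ) → Prop) (b : ι → ℤ) : Prop :=
  ∀ x y, inFiber L b x → inFiber L b y → IsRedPath L G b succ x y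

lemma IsMinimalFiber.eq {b' m' : ι → ℤ} (hto : IsTermOrder L succ)
    (hm : IsMinimalFiber L b succ m) (hm' : IsMinimalFiber L b' succ m') (hb : b - b' ∈ L) :
    m = m' := by
  by_contra hne
  exact hto.asymm (hm.2 m' ((inFiber_congr hb).2 hm'.1) (Ne.symm hne))
    (hm'.2 m ((inFiber_congr hb).1 hm.1) hne)

lemma IsGroebner.exists_pathWithin {x : ι → ℤ} (hto : IsTermOrder L succ)
    (h : IsGroebner L succ G) (hx : Nonneg x) :
    ∃ m, IsMinimalFiber L x succ m ∧ PathWithin L G x (fun w => w = x ∨ succ x w) x m := by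
  obtain ⟨m, hm, k, p, hp, rfl, hk, hdec⟩ := h x hx
  refine ⟨m, hm, k, p, hp, rfl, hk, fun i hi => ?_⟩
  induction i with
  | zero => exact Or.inl rfl
  | succ i ih =>
    exact Or.inr (hto.succ_of_eq_or_succ_of_succ (ih (by omega)) (hdec i (by omega)))

lemma IsGroebner.hasRedPaths (hto : IsTermOrder L succ) (h : IsGroebner L succ G) :
    HasRedPaths L G succ b := by
  intro x y hx hy
  obtain ⟨m, hm, hxm⟩ := h.exists_pathWithin hto hx.1
  obtain ⟨m', hm', hym⟩ := h.exists_pathWithin hto hy.1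
  obtain rfl := hm.eq hto hm' (by simpa using L.sub_mem hx.2 hy.2)
  apply isRedPath_of_pathWithin
  refine ((hxm.rebase hx.2).mono ?_).trans ((hym.rebase hy.2).symm.mono ?_)
  · exact fun w _ hw hs => hto.not_succ_of_eq_or_succ hw hs.1
  · exact fun w _ hw hs => hto.not_succ_of_eq_or_succ hw hs.2

lemma HasRedPaths.exists_adjS_succ (hto : IsTermOrder L succ) (hG : G ⊆ Lpos L succ)
    (h : HasRedPaths L G succ b) (hm : IsMinimalFiber L b succ m) (hy : inFiber L b y)
    (hne : y ≠ m) : ∃ y', inFiber L b y' ∧ adjS G y y' ∧ succ y y' := by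
  obtain ⟨k, p, hp, rfl, hk, hred⟩ := (h _ m hy hm.1).pathWithin hto
  have hk₀ : 0 < k := Nat.pos_of_ne_zero fun hk₀ => hne (by rw [← hk, hk₀])
  have hadj : adjS G (p 0) (p 1) := hp.2 0 hk₀
  refine ⟨p 1, hp.1 1 hk₀, hadj, ?_⟩
  by_cases h₁ : p 1 = m
  · exact h₁ ▸ hm.2 _ hy hne
  · refine (hto.eq_or_succ_of_not_succ (hp.1 1 hk₀) hy fun hs => ?_).resolve_left
      (hto.ne_of_adjS hG hadj).symm
    exact hred 1 hk₀ ⟨hs, hm.2 _ (hp.1 1 hk₀) h₁⟩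

lemma isGroebner_of_hasRedPaths (hto : IsTermOrder L succ) (hG : G ⊆ Lpos L succ)
    (h : ∀ b, HasRedPaths L G succ b) : IsGroebner L succ G := by
  intro x hx
  obtain ⟨m, hm, hmin⟩ := (hto.wf x).has_min {y | inFiber L x y} ⟨x, inFiber_self hx⟩
  have hm' : IsMinimalFiber L x succ m := ⟨hm, fun y hy hne =>
    (hto.eq_or_succ_of_not_succ hm hy fun hs => hmin y hy ⟨hy, hm, hs⟩).resolve_left hne.symm⟩
  refine ⟨m, hm', ?_⟩
  suffices ∀ y, inFiber L x y → ∃ k p, IsPathIn L G x k p ∧ p 0 = y ∧ p k = m ∧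
      ∀ i < k, succ (p i) (p (i + 1)) from this x (inFiber_self hx)
  intro y
  induction y using (hto.wf x).induction with
  | _ y ih =>
  intro hy
  by_cases hym : y = m
  · exact ⟨0, fun _ => y, ⟨fun _ _ => hy, by simp⟩, rfl, hym, by simp⟩
  obtain ⟨y', hy', hadj, hs⟩ := (h x).exists_adjS_succ hto hG hm' hy hym
  obtain ⟨k, p, hp, rfl, hk, hdec⟩ := ih y' ⟨hy', hy, hs⟩ hy'
  refine ⟨k + 1, fun | 0 => y | i + 1 => p i, ⟨?_, ?_⟩, rfl, hk, ?_⟩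
  · rintro (_ | i) hi
    exacts [hy, hp.1 i (by omega)]
  · rintro (_ | i) hi
    exacts [hadj, hp.2 i (by omega)]
  · rintro (_ | i) hi
    exacts [hs, hdec i (by omega)]

end Groebner

section PeakElimination

variable {ι : Type*} {L : AddSubgroup (ι → ℤ)} {succ : (ι → ℤ) → (ι → ℤ) → Prop}
  {G : Set (ι → ℤ)} {b x y z : ι → ℤ}

/-- Walking along the path, each visit of the peak `z` is replaced by the bypass of the
critical path through it. -/
lemma PathWithin.succ_of_bypass (hto : IsTermOrder L succ) (hG : G ⊆ Lpos L succ)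
    (hbyp : ∀ x z y, IsCriticalIn L G b succ x z y → PathWithin L G b (succ z) x y)
    (h : PathWithin L G b (fun w => w = z ∨ succ z w) x y) (hz : inFiber L b z)
    (hx : succ z x) (hy : succ z y) : PathWithin L G b (succ z) x y := by
  obtain ⟨k, p, hp, rfl, rfl, hle⟩ := h
  have key : ∀ i ≤ k, p i ≠ z → PathWithin L G b (succ z) (p 0) (p i) := by
    intro i
    induction i using Nat.strong_induction_on with
    | _ i ih =>
    rcases i with _ | i
    · exact fun _ _ => PathWithin.refl (hp.1 0 k.zero_le) hx
    intro hi hne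
    have hs : succ z (p (i + 1)) := (hle _ hi).resolve_left hne
    by_cases hpi : p i = z
    · rcases i with _ | i
      · exact absurd (hpi ▸ hx) (hto.irrefl z)
      have hne' : p i ≠ z := fun h => hto.ne_of_adjS hG (hp.2 i (by omega)) (h.trans hpi.symm)
      have hcrit : IsCriticalIn L G b succ (p i) z (p (i + 2)) :=
        ⟨hp.1 i (by omega), hz, hp.1 _ hi, hpi ▸ hp.2 i (by omega),
          hpi ▸ hp.2 (i + 1) (by omega), (hle i (by omega)).resolve_left hne', hs⟩
      exact (ih i (by omega) (by omega) hne').trans (hbyp _ _ _ hcrit)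
    · exact (ih i (by omega) (by omega) hpi).trans (PathWithin.of_adjS (hp.1 i (by omega))
        (hp.1 _ hi) (hp.2 i (by omega)) ((hle i (by omega)).resolve_left hpi) hs)
  exact key k le_rfl fun h => hto.irrefl z (h ▸ hy)

lemma hasRedPaths_of_bypass (hto : IsTermOrder L succ) (hG : G ⊆ Lpos L succ)
    (hgen : IsGenSet L G)
    (hbyp : ∀ x z y, IsCriticalIn L G b succ x z y → PathWithin L G b (succ z) x y) :
    HasRedPaths L G succ b := by
  suffices H : ∀ z, inFiber L b z → ∀ x y,
      PathWithin L G b (fun w => w = z ∨ succ z w) x y → IsRedPath L G b succ x y by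
    intro x y hx hy
    obtain ⟨z, hz, -, h⟩ := (hgen b x y hx hy).pathWithin.exists_max hto
    exact H z hz x y h
  intro z
  induction z using (hto.wf b).induction with
  | _ z ih =>
  intro hz x y h
  by_cases hxy : succ z x ∧ succ z y
  · obtain ⟨z', hz', hzz', h'⟩ :=
      (h.succ_of_bypass hto hG hbyp hz hxy.1 hxy.2).exists_max hto
    exact ih z' ⟨hz', hz, hzz'⟩ hz' x y h'
  · refine isRedPath_of_pathWithin (h.mono fun w _ hw hs => hxy ⟨?_, ?_⟩)
    exacts [hto.succ_of_eq_or_succ_of_succ hw hs.1, hto.succ_of_eq_or_succ_of_succ hw hs.2]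

end PeakElimination

section CriticalPairs

variable {ι : Type*} {L : AddSubgroup (ι → ℤ)} {succ : (ι → ℤ) → (ι → ℤ) → Prop}
  {G : Set (ι → ℤ)} {b c x y z γ : ι → ℤ}

lemma nonneg_single (j : ι) : Nonneg (Pi.single j 1 : ι → ℤ) := by
  intro i
  by_cases h : i = j
  · subst h; simp
  · simp [h]

lemma nonneg_sub_single (hx : Nonneg x) {j : ι} (hj : 1 ≤ x j) : Nonneg (x - Pi.single j 1) := by
  intro i
  by_cases h : i = j
  · subst h; simpa using hj
  · simpa [h] using hx i

lemma inFiber.add_of_inFiber (hy : inFiber L c y) (hγ : Nonneg γ) (hc : inFiber L b (c + γ)) :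
    inFiber L b (y + γ) := by
  refine ⟨fun i => add_nonneg (hy.1 i) (hγ i), ?_⟩
  have e : y + γ - b = (y - c) + (c + γ - b) := by abel
  rw [e]
  exact L.add_mem hy.2 hc.2

lemma nonneg_xOf (u v : ι → ℤ) : Nonneg (xOf u v) := fun i => by
  have h₁ : u i ≤ vposPart u i := le_max_left _ _
  have h₂ : vposPart u i ≤ zOf u v i := le_max_left _ _
  simp only [xOf, Pi.sub_apply]
  omega

lemma nonneg_yOf (u v : ι → ℤ) : Nonneg (yOf u v) := fun i => by
  have h₁ : v i ≤ vposPart v i := le_max_left _ _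
  have h₂ : vposPart v i ≤ zOf u v i := le_max_right _ _
  simp only [yOf, Pi.sub_apply]
  omega

lemma nonneg_sub_zOf (hx : Nonneg x) (hy : Nonneg y) (hz : Nonneg z) :
    Nonneg (z - zOf (z - x) (z - y)) := fun i => by
  have := hx i
  have := hy i
  have := hz i
  simp only [zOf, vposPart, Pi.sub_apply]
  omega

lemma xOf_add_sub_zOf (u v z : ι → ℤ) : xOf u v + (z - zOf u v) = z - u := by
  simp only [xOf]
  abel

lemma yOf_add_sub_zOf (u v z : ι → ℤ) : yOf u v + (z - zOf u v) = z - v := by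
  simp only [yOf]
  abel

/-- Each node of a reduction path lies weakly below one of its ends. -/
lemma IsRedPath.translate (hto : IsTermOrder L succ) (h : IsRedPath L G c succ x y)
    (hγ : Nonneg γ) (hb : x + γ - b ∈ L) (hx : succ z (x + γ)) (hy : succ z (y + γ)) :
    PathWithin L G b (succ z) (x + γ) (y + γ) := by
  have h' := h.pathWithin hto
  have below : ∀ {w e}, inFiber L c w → inFiber L c e → succ z (e + γ) → ¬ succ w e →
      succ z (w + γ) := by
    intro w e hw he hze hwe
    rcases hto.eq_or_succ_of_not_succ hw he hwe with rfl | hew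
    · exact hze
    · exact hto.trans hze (hto.additive _ _ γ hγ hew)
  refine h'.translate hγ hb fun w hw hred => ?_
  by_cases hwx : succ w x
  · exact below hw h'.symm.inFiber_left hy fun hwy => hred ⟨hwx, hwy⟩
  · exact below hw h'.inFiber_left hx hwx

lemma IsCriticalIn.pathWithin_succ (hto : IsTermOrder L succ) (hG : G ⊆ Lpos L succ)
    (hcrit : ∀ u ∈ G, ∀ v ∈ G, suppV (xOf u v) ∩ suppV (yOf u v) = ∅ →
      IsRedPath L G (zOf u v) succ (xOf u v) (yOf u v))
    (hsub : ∀ j c, inFiber L b (c + Pi.single j 1) → HasRedPaths L G succ c)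
    (hc : IsCriticalIn L G b succ x z y) : PathWithin L G b (succ z) x y := by
  obtain ⟨hx, hz, hy, hxz, hzy, hzx, hzy'⟩ := hc
  have hu : z - x ∈ G := hto.sub_mem_of_adjS_of_succ hG hz.1 hx.1 hxz.symm hzx
  have hv : z - y ∈ G := hto.sub_mem_of_adjS_of_succ hG hz.1 hy.1 hzy hzy'
  have hγ := nonneg_sub_zOf hx.1 hy.1 hz.1
  have hx' : xOf (z - x) (z - y) + (z - zOf (z - x) (z - y)) = x := by
    rw [xOf_add_sub_zOf, sub_sub_cancel]
  have hy' : yOf (z - x) (z - y) + (z - zOf (z - x) (z - y)) = y := by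
    rw [yOf_add_sub_zOf, sub_sub_cancel]
  by_cases hdisj : suppV (xOf (z - x) (z - y)) ∩ suppV (yOf (z - x) (z - y)) = ∅
  · have := (hcrit _ hu _ hv hdisj).translate hto hγ (by rw [hx']; exact hx.2)
      (by rw [hx']; exact hzx) (by rw [hy']; exact hzy')
    rwa [hx', hy'] at this
  obtain ⟨j, hxj, hyj⟩ := Set.nonempty_iff_ne_empty.2 hdisj
  have hxj' : 1 ≤ x j := by
    have h₀ : xOf (z - x) (z - y) j ≠ 0 := hxj
    have := nonneg_xOf (z - x) (z - y) j
    have := hγ j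
    rw [← hx', Pi.add_apply]
    omega
  have hyj' : 1 ≤ y j := by
    have h₀ : yOf (z - x) (z - y) j ≠ 0 := hyj
    have := nonneg_yOf (z - x) (z - y) j
    have := hγ j
    rw [← hy', Pi.add_apply]
    omega
  have hx₁ : inFiber L (x - Pi.single j 1) (x - Pi.single j 1) :=
    inFiber_self (nonneg_sub_single hx.1 hxj')
  have hy₁ : inFiber L (x - Pi.single j 1) (y - Pi.single j 1) :=
    ⟨nonneg_sub_single hy.1 hyj', by simpa using L.sub_mem hy.2 hx.2⟩
  simpa using (hsub j _ (by simpa using hx) _ _ hx₁ hy₁).translate hto (nonneg_single j)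
    (by simpa using hx.2) (by simpa using hzx) (by simpa using hzy')

end CriticalPairs

section Criterion

variable {ι : Type*} {L : AddSubgroup (ι → ℤ)} {succ : (ι → ℤ) → (ι → ℤ) → Prop}
  {G : Set (ι → ℤ)}

/-- Dickson's lemma: since `L ∩ ℕ^n = {0}`, a fiber is an antichain of `ℕ^n`. -/
lemma inFiber_finite [Finite ι] (hL : ∀ u ∈ L, Nonneg u → u = 0) (b : ι → ℤ) :
    {y | inFiber L b y}.Finite := by
  have hanti : IsAntichain (· ≤ ·) ((fun y i => (y i).toNat) '' {y | inFiber L b y}) := by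
    rintro _ ⟨x, hx, rfl⟩ _ ⟨y, hy, rfl⟩ hne hle
    have hxy : y - x = 0 := hL _ (by simpa using L.sub_mem hy.2 hx.2) fun i => by
      have h := hle i
      have := hx.1 i
      have := hy.1 i
      dsimp only at h
      simp only [Pi.sub_apply]
      omega
    rw [sub_eq_zero.1 hxy] at hne
    exact hne rfl
  refine Set.Finite.of_finite_image (WellQuasiOrderedLE.finite_of_isAntichain hanti) ?_
  intro x hx y hy hxy
  ext i
  have h := congrFun hxy i
  have := hx.1 i
  have := hy.1 i
  dsimp only at h
  omega

lemma exists_sum_lt_of_inFiber [Fintype ι] (hL : ∀ u ∈ L, Nonneg u → u = 0)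
    (b : ι → ℤ) : ∃ N : ℕ, ∀ y, inFiber L b y → ∑ i, y i < N := by
  obtain ⟨M, hM⟩ := ((inFiber_finite hL b).image fun y => ∑ i, y i).bddAbove
  exact ⟨M.toNat + 1, fun y hy => (hM ⟨y, hy, rfl⟩).trans_lt (by omega)⟩

lemma sum_add_single [Fintype ι] (y : ι → ℤ) (j : ι) :
    ∑ i, (y + Pi.single j 1 : ι → ℤ) i = ∑ i, y i + 1 := by
  simp [Finset.sum_add_distrib]

lemma hasRedPaths_of_criterion [Fintype ι] (hL : ∀ u ∈ L, Nonneg u → u = 0)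
    (hto : IsTermOrder L succ) (hG : G ⊆ Lpos L succ) (hgen : IsGenSet L G)
    (hcrit : ∀ u ∈ G, ∀ v ∈ G, suppV (xOf u v) ∩ suppV (yOf u v) = ∅ →
      IsRedPath L G (zOf u v) succ (xOf u v) (yOf u v))
    (b : ι → ℤ) : HasRedPaths L G succ b := by
  obtain ⟨N, hN⟩ := exists_sum_lt_of_inFiber hL b
  induction N generalizing b with
  | zero =>
    refine fun x _ hx => absurd (hN x hx) ?_
    simpa using Finset.sum_nonneg fun i _ => hx.1 i
  | succ N ih =>
    refine hasRedPaths_of_bypass hto hG hgen fun x z y hc => hc.pathWithin_succ hto hG hcrit ?_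
    refine fun j c hc => ih c fun y hy => ?_
    have := hN _ (hy.add_of_inFiber (nonneg_single j) hc)
    rw [sum_add_single] at this
    push_cast at this
    omega

end Criterion

/-- cancellation criterion: if `G` is a generating set of `L`,
then `G ⊆ L_≻` is a `≻`-Gröbner basis of `L` iff for each pair `u,v ∈ G` with
`supp(x^(u,v)) ∩ supp(y^(u,v)) = ∅` there is a `≻`-reduction path between
`x^(u,v)` and `y^(u,v)` in `G(F_{L,z^(u,v)},G)`. -/
theorem stmt18 {n : ℕ} (L : AddSubgroup (Fin n → ℤ))
    (hL : ∀ u ∈ L, Nonneg u → u = 0)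
    (succ : (Fin n → ℤ) → (Fin n → ℤ) → Prop) (hto : IsTermOrder L succ)
    (G : Set (Fin n → ℤ)) (hG : G ⊆ Lpos L succ)
    (hgen : IsGenSet L G) :
    IsGroebner L succ G ↔
      ∀ u ∈ G, ∀ v ∈ G, suppV (xOf u v) ∩ suppV (yOf u v) = ∅ →
        IsRedPath L G (zOf u v) succ (xOf u v) (yOf u v) := by
  refine ⟨fun h u hu v hv _ => ?_, fun hcrit =>
    isGroebner_of_hasRedPaths hto hG (hasRedPaths_of_criterion hL hto hG hgen hcrit)⟩
  have hx : inFiber L (zOf u v) (xOf u v) := ⟨nonneg_xOf u v, by simpa [xOf] using (hG hu).1⟩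
  have hy : inFiber L (zOf u v) (yOf u v) := ⟨nonneg_yOf u v, by simpa [yOf] using (hG hv).1⟩
  exact h.hasRedPaths hto _ _ hx hy
end

section
/- Let u, v, w ∈ G ⊆ L_≻ with z^(u,v) ≥ w⁺ (component-wise). If there exists a z^(u,w)-bounded path from x^(u,w) to y^(u,w) and a z^(w,v)-bounded path from x^(w,v) to y^(w,v), then there exists a z^(u,v)-bounded path from x^(u,v) to y^(u,v) in G(F_{L, z^(u,v)}, G). -/
open scoped Classical

/-- the `(u,v,w)` criterion: if `u,v,w ∈ G ⊆ L_≻` with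
`z^(u,v) ≥ w⁺` and there exist a `z^(u,w)`-bounded path from `x^(u,w)` to
`y^(u,w)` and a `z^(w,v)`-bounded path from `x^(w,v)` to `y^(w,v)`, then there
is a `z^(u,v)`-bounded path from `x^(u,v)` to `y^(u,v)` in
`G(F_{L,z^(u,v)},G)`. -/
theorem stmt19 {n : ℕ} (L : AddSubgroup (Fin n → ℤ))
    (hL : ∀ u ∈ L, Nonneg u → u = 0)
    (succ : (Fin n → ℤ) → (Fin n → ℤ) → Prop) (hto : IsTermOrder L succ)
    (G : Set (Fin n → ℤ)) (hG : G ⊆ Lpos L succ)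
    (u v w : Fin n → ℤ) (hu : u ∈ G) (hv : v ∈ G) (hw : w ∈ G)
    (hge : ∀ t, vposPart w t ≤ zOf u v t)
    (h1 : IsBoundedPath L G (zOf u w) succ (zOf u w) (xOf u w) (yOf u w))
    (h2 : IsBoundedPath L G (zOf w v) succ (zOf w v) (xOf w v) (yOf w v)) :
    IsBoundedPath L G (zOf u v) succ (zOf u v) (xOf u v) (yOf u v) := by
  obtain ⟨k1, p1, ⟨hfib1, hadj1⟩, h10, h1k, hb1⟩ := h1
  obtain ⟨k2, p2, ⟨hfib2, hadj2⟩, h20, h2k, hb2⟩ := h2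
  set z := zOf u v with hz
  set γ1 : Fin n → ℤ := z - zOf u w with hγ1def
  set γ2 : Fin n → ℤ := z - zOf w v with hγ2def
  have hγ1 : Nonneg γ1 := by
    intro t
    have h1 : vposPart u t ≤ z t := le_max_left _ _
    have h2 : vposPart w t ≤ z t := hge t
    have : zOf u w t ≤ z t := max_le h1 h2
    simpa [hγ1def, sub_nonneg] using this
  have hγ2 : Nonneg γ2 := by
    intro t
    have h1 : vposPart w t ≤ z t := hge t
    have h2 : vposPart v t ≤ z t := le_max_right _ _
    have : zOf w v t ≤ z t := max_le h1 h2
    simpa [hγ2def, sub_nonneg] using this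
  have e1 : p1 k1 + γ1 = z - w := by
    rw [h1k]; unfold yOf; rw [hγ1def]; abel
  have e2 : p2 0 + γ2 = z - w := by
    rw [h20]; unfold xOf; rw [hγ2def]; abel
  refine ⟨k1 + k2, fun i => if i ≤ k1 then p1 i + γ1 else p2 (i - k1) + γ2,
    ⟨?_, ?_⟩, ?_, ?_, ?_⟩
  · -- fiber membership
    intro i hi
    by_cases hik : i ≤ k1
    · simp only [hik, if_pos]
      constructor
      · intro t
        have := (hfib1 i hik).1 t
        have := hγ1 t
        simp only [Pi.add_apply]; omega
      · have hm := (hfib1 i hik).2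
        have : p1 i + γ1 - z = p1 i - zOf u w := by rw [hγ1def]; abel
        rw [this]; exact hm
    · simp only [hik, if_neg, not_false_iff]
      have hik2 : i - k1 ≤ k2 := by omega
      constructor
      · intro t
        have := (hfib2 _ hik2).1 t
        have := hγ2 t
        simp only [Pi.add_apply]; omega
      · have hm := (hfib2 _ hik2).2
        have : p2 (i - k1) + γ2 - z = p2 (i - k1) - zOf w v := by rw [hγ2def]; abel
        rw [this]; exact hm
  · -- adjacency
    intro i hi
    have hadd : ∀ (a b γ : Fin n → ℤ), adjS G a b → adjS G (a + γ) (b + γ) := by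
      intro a b γ h
      simpa [adjS, add_sub_add_right_eq_sub] using h
    by_cases hik : i + 1 ≤ k1
    · simp only [show i ≤ k1 by omega, if_pos, hik]
      exact hadd _ _ _ (hadj1 i (by omega))
    · by_cases hik' : i ≤ k1
      · have hik1 : i = k1 := by omega
        have hk2 : 0 < k2 := by omega
        simp only [hik', if_pos, hik, if_neg, not_false_iff]
        rw [hik1, e1, show k1 + 1 - k1 = 1 by omega, ← e2]
        exact hadd _ _ _ (hadj2 0 hk2)
      · simp only [hik', if_neg, not_false_iff, hik]
        rw [show i + 1 - k1 = (i - k1) + 1 by omega]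
        exact hadd _ _ _ (hadj2 (i - k1) (by omega))
  · -- start
    simp only [Nat.zero_le, if_pos, h10]
    unfold xOf; rw [hγ1def]; abel
  · -- end
    by_cases hk2 : k2 = 0
    · subst hk2
      simp only [Nat.add_zero, le_refl, if_pos]
      have hwv : w = v := by
        have := h20.symm.trans h2k
        unfold xOf yOf at this
        have h := sub_right_injective this
        exact h
      rw [e1, hwv]; rfl
    · simp only [show ¬ (k1 + k2 ≤ k1) by omega, if_neg, not_false_iff,
        show k1 + k2 - k1 = k2 by omega, h2k]
      unfold yOf; rw [hγ2def]; abel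
  · -- bound
    intro i hi
    by_cases hik : i ≤ k1
    · simp only [hik, if_pos]
      have := hto.additive _ _ γ1 hγ1 (hb1 i hik)
      have hzz : zOf u w + γ1 = z := by rw [hγ1def]; abel
      rwa [hzz] at this
    · simp only [hik, if_neg, not_false_iff]
      have := hto.additive _ _ γ2 hγ2 (hb2 (i - k1) (by omega))
      have hzz : zOf w v + γ2 = z := by rw [hγ2def]; abel
      rwa [hzz] at this
end
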